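/- arXiv:2511.01103 — 4 statements merged into one kernel-verified Lean document; each statement's English description precedes it below -/
import Mathlib

section
/- Let n ≥ 1 and let δ_1, …, δ_n ∈ {0,1}, and let ŷ_i = max_{1 ≤ s ≤ i} min_{i ≤ t ≤ n} ( (Σ_{j=s}^{t} δ_j) / (t − s + 1) ) be the isotonic regression of δ. Define, for nondecreasing y ∈ [0,1]^n, the extended-real-valued log likelihood ℓ(y) = Σ_{i=1}^{n} [δ_i · log y_i + (1 − δ_i) · log(1 − y_i)], where a term δ_i · log y_i is interpreted as 0 when δ_i = 0 and as −∞ when δ_i = 1, y_i = 0, and symmetrically (1 − δ_i) · log(1 − y_i) is 0 when δ_i = 1 and −∞ when δ_i = 0, y_i = 1. Then ŷ is the unique maximizer of ℓ over all nondecreasing y ∈ [0,1]^n; in particular, in the current status model the nonparametric maximum likelihood estimator and the nonparametric least squares estimator coincide. -/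
open Finset

namespace CSAux

variable (n : ℕ) (d : ℕ → ℝ)

noncomputable def Av (s t : ℕ) : ℝ := (∑ j ∈ Finset.Icc s t, d j) / ((t - s + 1 : ℕ) : ℝ)

def SI (s t : ℕ) : ℝ := ∑ j ∈ Finset.Icc s t, d j

noncomputable def minVal (p : ℕ) : ℝ :=
  if h : p < n then (Finset.Icc p (n-1)).inf' (Finset.nonempty_Icc.mpr (by omega)) (Av d p) else 0

noncomputable def ee (p : ℕ) : ℕ :=
  if h : ((Finset.Icc p (n-1)).filter (fun t => Av d p t = minVal n d p)).Nonempty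
  then ((Finset.Icc p (n-1)).filter (fun t => Av d p t = minVal n d p)).max' h else p

variable (hn : 1 ≤ n)

lemma minVal_le {p t : ℕ} (hp : p < n) (hpt : p ≤ t) (ht : t < n) : minVal n d p ≤ Av d p t := by
  rw [minVal, dif_pos hp]
  exact Finset.inf'_le _ (by simp [Finset.mem_Icc]; omega)

lemma ee_spec {p : ℕ} (hp : p < n) :
    p ≤ ee n d p ∧ ee n d p < n ∧ Av d p (ee n d p) = minVal n d p := by
  have h1 : ∃ t ∈ Finset.Icc p (n-1), minVal n d p = Av d p t := by
    rw [minVal, dif_pos hp]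
    exact Finset.exists_mem_eq_inf' _ _
  obtain ⟨t0, ht0, ht0'⟩ := h1
  have hne : ((Finset.Icc p (n-1)).filter (fun t => Av d p t = minVal n d p)).Nonempty :=
    ⟨t0, Finset.mem_filter.mpr ⟨ht0, ht0'.symm⟩⟩
  rw [ee, dif_pos hne]
  have hmem := Finset.max'_mem _ hne
  rw [Finset.mem_filter, Finset.mem_Icc] at hmem
  exact ⟨hmem.1.1, by omega, hmem.2⟩

lemma ee_lt {p t : ℕ} (hp : p < n) (het : ee n d p < t) (ht : t < n) :
    minVal n d p < Av d p t := by
  have hpe : p ≤ ee n d p := (ee_spec n d hp).1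
  have hpt : p ≤ t := by omega
  have hle : minVal n d p ≤ Av d p t := minVal_le n d hp hpt ht
  rcases hle.lt_or_eq with h | h
  · exact h
  · exfalso
    have htmem : t ∈ (Finset.Icc p (n-1)).filter (fun t => Av d p t = minVal n d p) :=
      Finset.mem_filter.mpr ⟨Finset.mem_Icc.mpr ⟨hpt, by omega⟩, h.symm⟩
    have hne : ((Finset.Icc p (n-1)).filter (fun t => Av d p t = minVal n d p)).Nonempty :=
      ⟨t, htmem⟩
    have hle2 := Finset.le_max' _ t htmem
    rw [ee, dif_pos hne] at het
    omega

lemma len_pos {s t : ℕ} (hst : s ≤ t) : (0:ℝ) < ((t - s + 1 : ℕ) : ℝ) := by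
  have : 0 < t - s + 1 := by omega
  exact_mod_cast this

lemma le_Av_iff {s t : ℕ} (hst : s ≤ t) {v : ℝ} :
    v ≤ Av d s t ↔ v * ((t - s + 1 : ℕ) : ℝ) ≤ SI d s t := by
  rw [Av, le_div_iff₀ (len_pos hst)]; rfl

lemma Av_le_iff {s t : ℕ} (hst : s ≤ t) {v : ℝ} :
    Av d s t ≤ v ↔ SI d s t ≤ v * ((t - s + 1 : ℕ) : ℝ) := by
  rw [Av, div_le_iff₀ (len_pos hst)]; rfl

lemma SI_split {s u t : ℕ} (hsu : s ≤ u) (hut : u < t) :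
    SI d s t = SI d s u + SI d (u+1) t := by
  have h1 : Finset.Icc s t = Finset.Ico s (t+1) := (Finset.Ico_add_one_right_eq_Icc s t).symm
  have h2 : Finset.Icc s u = Finset.Ico s (u+1) := (Finset.Ico_add_one_right_eq_Icc s u).symm
  have h3 : Finset.Icc (u+1) t = Finset.Ico (u+1) (t+1) := (Finset.Ico_add_one_right_eq_Icc _ t).symm
  rw [SI, SI, SI, h1, h2, h3]
  exact (Finset.sum_Ico_consecutive _ (by omega) (by omega)).symm

lemma minVal_mul_le {p t : ℕ} (hp : p < n) (hpt : p ≤ t) (ht : t < n) :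
    minVal n d p * ((t - p + 1 : ℕ) : ℝ) ≤ SI d p t :=
  (le_Av_iff d hpt).mp (minVal_le n d hp hpt ht)

lemma SI_ee_eq {p : ℕ} (hp : p < n) :
    SI d p (ee n d p) = minVal n d p * ((ee n d p - p + 1 : ℕ) : ℝ) := by
  obtain ⟨h1, h2, h3⟩ := ee_spec n d hp
  have := (le_Av_iff d h1 (v := minVal n d p)).mp h3.symm.le
  have := (Av_le_iff d h1 (v := minVal n d p)).mp h3.le
  linarith

lemma SI_gt_of_gt_ee {p t : ℕ} (hp : p < n) (het : ee n d p < t) (ht : t < n) :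
    minVal n d p * ((t - p + 1 : ℕ) : ℝ) < SI d p t := by
  have h := ee_lt n d hp het ht
  have hpt : p ≤ t := le_trans (ee_spec n d hp).1 het.le
  rw [Av, lt_div_iff₀ (len_pos hpt)] at h
  exact h

noncomputable def bstart : ℕ → ℕ
  | 0 => 0
  | (i+1) => if ee n d (bstart i) ≤ i then i+1 else bstart i

lemma bstart_succ (i : ℕ) :
    bstart n d (i+1) = if ee n d (bstart n d i) ≤ i then i+1 else bstart n d i := rfl

lemma bstart_le (i : ℕ) : bstart n d i ≤ i := by
  induction i with
  | zero => simp [bstart]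
  | succ i ih =>
    rw [bstart_succ]
    split <;> omega

lemma bstart_lt (i : ℕ) (hi : i < n) : bstart n d i < n := lt_of_le_of_lt (bstart_le n d i) hi

lemma le_ee_bstart (i : ℕ) (hi : i < n) : i ≤ ee n d (bstart n d i) := by
  induction i with
  | zero => exact (ee_spec n d (bstart_lt n d 0 hi)).1.trans' (by simp [bstart])
  | succ i ih =>
    have hi' : i < n := by omega
    rw [bstart_succ]
    split
    · exact (ee_spec n d (by omega : i + 1 < n)).1
    · have := ih hi'
      omega

lemma bstart_bstart (i : ℕ) : bstart n d (bstart n d i) = bstart n d i := by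
  induction i with
  | zero => simp [bstart]
  | succ i ih =>
    by_cases hc : ee n d (bstart n d i) ≤ i
    · rw [bstart_succ, if_pos hc, bstart_succ, if_pos hc]
    · rw [bstart_succ, if_neg hc]
      exact ih

lemma bstart_eq_of_between {i j : ℕ} (h1 : bstart n d i ≤ j) (h2 : j ≤ i) :
    bstart n d j = bstart n d i := by
  induction i with
  | zero =>
    have : j = 0 := by omega
    rw [this]
  | succ i ih =>
    by_cases hc : ee n d (bstart n d i) ≤ i
    · rw [bstart_succ, if_pos hc] at h1 ⊢
      have : j = i + 1 := by omega
      rw [this, bstart_succ, if_pos hc]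
    · rw [bstart_succ, if_neg hc] at h1 ⊢
      rcases Nat.lt_or_ge j (i+1) with h | h
      · exact ih h1 (by omega)
      · have hj : j = i + 1 := by omega
        rw [hj, bstart_succ, if_neg hc]

lemma bstart_eq_of_le_ee {j i : ℕ} (hji : j ≤ i) (hi : i ≤ ee n d (bstart n d j)) :
    bstart n d i = bstart n d j := by
  induction i with
  | zero =>
    have : j = 0 := by omega
    rw [this]
  | succ i ih =>
    rcases Nat.lt_or_ge i j with h | h
    · have : j = i + 1 := by omega
      rw [this]
    · have hbi : bstart n d i = bstart n d j := ih h (by omega)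
      by_cases hc : ee n d (bstart n d i) ≤ i
      · rw [hbi] at hc
        omega
      · rw [bstart_succ, if_neg hc]
        exact hbi

noncomputable def yw (j : ℕ) : ℝ := minVal n d (bstart n d j)

lemma cast_add_split {s u t : ℕ} (hsu : s ≤ u) (hut : u < t) :
    ((t - s + 1 : ℕ) : ℝ) = ((u - s + 1 : ℕ) : ℝ) + ((t - (u+1) + 1 : ℕ) : ℝ) := by
  have : t - s + 1 = (u - s + 1) + (t - (u+1) + 1) := by omega
  rw [this, Nat.cast_add]

lemma minVal_succ_gt {j : ℕ} (hj1 : j + 1 < n) (hc : ee n d (bstart n d j) ≤ j) :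
    minVal n d (bstart n d j) < minVal n d (j+1) := by
  set p := bstart n d j with hp
  have hpn : p < n := bstart_lt n d j (by omega)
  have heej : ee n d p = j := le_antisymm hc (le_ee_bstart n d j (by omega))
  obtain ⟨h1, h2, h3⟩ := ee_spec n d hj1
  set t0 := ee n d (j+1) with ht0
  by_contra hcon
  push_neg at hcon
  rw [← h3] at hcon
  have hSle : SI d (j+1) t0 ≤ minVal n d p * ((t0 - (j+1) + 1 : ℕ) : ℝ) :=
    le_trans ((Av_le_iff d h1).mp le_rfl) (by
      apply mul_le_mul_of_nonneg_right hcon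
      positivity)
  have hsplit : SI d p t0 = SI d p j + SI d (j+1) t0 :=
    SI_split d (le_trans (bstart_le n d j) (le_refl j)) (by omega)
  have hSj : SI d p j = minVal n d p * ((j - p + 1 : ℕ) : ℝ) := by
    rw [← heej]
    exact SI_ee_eq n d hpn
  have hgt : minVal n d p * ((t0 - p + 1 : ℕ) : ℝ) < SI d p t0 :=
    SI_gt_of_gt_ee n d hpn (by omega) h2
  rw [hsplit, hSj, cast_add_split (bstart_le n d j) (by omega : j < t0), mul_add] at hgt
  have : ((t0 - (j+1) + 1 : ℕ) : ℝ) = ((t0 - j : ℕ) : ℝ) := by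
    congr 1
    omega
  linarith [hSle]

lemma yw_mono {i j : ℕ} (hij : i ≤ j) (hj : j < n) : yw n d i ≤ yw n d j := by
  induction j with
  | zero =>
    have : i = 0 := by omega
    rw [this]
  | succ j ih =>
    rcases Nat.lt_or_ge i (j+1) with h | h
    · have hle : yw n d i ≤ yw n d j := ih (by omega) (by omega)
      refine le_trans hle ?_
      unfold yw
      by_cases hc : ee n d (bstart n d j) ≤ j
      · have hb : bstart n d (j+1) = j + 1 := by rw [bstart_succ, if_pos hc]
        rw [hb]
        exact (minVal_succ_gt n d hj hc).le
      · rw [bstart_succ, if_neg hc]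
    · have : i = j + 1 := by omega
      rw [this]

lemma rightPartial {p s : ℕ} (hp : p < n) (hps : p ≤ s) (hse : s ≤ ee n d p) :
    SI d s (ee n d p) ≤ minVal n d p * ((ee n d p - s + 1 : ℕ) : ℝ) := by
  rcases Nat.eq_or_lt_of_le hps with h | h
  · rw [← h]
    exact (SI_ee_eq n d hp).le
  · have hs1 : p ≤ s - 1 := by omega
    have hs1n : s - 1 < n := by
      have := (ee_spec n d hp).2.1
      omega
    have hlow : minVal n d p * ((s - 1 - p + 1 : ℕ) : ℝ) ≤ SI d p (s-1) :=
      minVal_mul_le n d hp hs1 hs1n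
    have hsplit : SI d p (ee n d p) = SI d p (s-1) + SI d s (ee n d p) := by
      have := SI_split d hs1 (by omega : s - 1 < ee n d p)
      have hss : s - 1 + 1 = s := by omega
      rw [hss] at this
      exact this
    have heq := SI_ee_eq n d hp
    have hcast : ((ee n d p - p + 1 : ℕ) : ℝ)
        = ((s - 1 - p + 1 : ℕ) : ℝ) + ((ee n d p - s + 1 : ℕ) : ℝ) := by
      have : ee n d p - p + 1 = (s - 1 - p + 1) + (ee n d p - s + 1) := by omega
      rw [this, Nat.cast_add]
    rw [hsplit, hcast, mul_add] at heq
    linarith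

lemma keyUB : ∀ m : ℕ, ∀ i s : ℕ, i < n → s ≤ i → ee n d (bstart n d i) - s ≤ m →
    SI d s (ee n d (bstart n d i)) ≤ yw n d i * ((ee n d (bstart n d i) - s + 1 : ℕ) : ℝ) := by
  intro m
  induction m with
  | zero =>
    intro i s hi hsi hm
    have hE : s ≤ ee n d (bstart n d i) := le_trans hsi (le_ee_bstart n d i hi)
    have hsE : s = ee n d (bstart n d i) := by omega
    have hps : bstart n d i ≤ s := by
      rw [hsE]
      exact (ee_spec n d (bstart_lt n d i hi)).1
    exact rightPartial n d (bstart_lt n d i hi) hps (by omega)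
  | succ m ih =>
    intro i s hi hsi hm
    by_cases hcase : bstart n d i ≤ s
    · exact rightPartial n d (bstart_lt n d i hi) hcase (le_trans hsi (le_ee_bstart n d i hi))
    · push_neg at hcase
      set q := bstart n d s with hq
      set eq := ee n d q with heqq
      have hsn : s < n := by omega
      have hqs : q ≤ s := bstart_le n d s
      have hseq : s ≤ eq := le_ee_bstart n d s hsn
      have heqi : eq < i := by
        by_contra hcon
        push_neg at hcon
        have := bstart_eq_of_le_ee n d hsi hcon
        omega
      set E := ee n d (bstart n d i) with hE
      have hiE : i ≤ E := le_ee_bstart n d i hi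
      have hsplit : SI d s E = SI d s eq + SI d (eq+1) E :=
        SI_split d hseq (by omega)
      have h1 : SI d s eq ≤ yw n d s * ((eq - s + 1 : ℕ) : ℝ) :=
        rightPartial n d (bstart_lt n d s hsn) hqs hseq
      have h2 : SI d (eq+1) E ≤ yw n d i * ((E - (eq+1) + 1 : ℕ) : ℝ) :=
        ih i (eq+1) hi (by omega) (by omega)
      have hwm : yw n d s ≤ yw n d i := yw_mono n d (by omega) hi
      have hcast : ((E - s + 1 : ℕ) : ℝ) = ((eq - s + 1 : ℕ) : ℝ) + ((E - (eq+1) + 1 : ℕ) : ℝ) :=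
        cast_add_split hseq (by omega)
    
      calc SI d s E = SI d s eq + SI d (eq+1) E := hsplit
        _ ≤ yw n d s * ((eq - s + 1 : ℕ) : ℝ) + yw n d i * ((E - (eq+1) + 1 : ℕ) : ℝ) := by
            linarith
        _ ≤ yw n d i * ((eq - s + 1 : ℕ) : ℝ) + yw n d i * ((E - (eq+1) + 1 : ℕ) : ℝ) := by
            have : (0:ℝ) ≤ ((eq - s + 1 : ℕ) : ℝ) := by positivity
            nlinarith
        _ = yw n d i * ((E - s + 1 : ℕ) : ℝ) := by rw [hcast, mul_add]

noncomputable def TT (k : ℕ) : ℝ := ∑ j ∈ Finset.range k, (d j - yw n d j)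

lemma TT_succ_eq (i : ℕ) (hi : i < n) :
    TT n d (i+1) = TT n d (bstart n d i)
      + (SI d (bstart n d i) i - yw n d i * ((i - bstart n d i + 1 : ℕ) : ℝ)) := by
  set p := bstart n d i with hp
  have hpi : p ≤ i := bstart_le n d i
  have hIco : ∑ j ∈ Finset.Ico p (i+1), (d j - yw n d j)
      = TT n d (i+1) - TT n d p := by
    have h := Finset.sum_Ico_consecutive (fun j => d j - yw n d j)
      (Nat.zero_le p) (by omega : p ≤ i + 1)
    rw [TT, TT, Finset.range_eq_Ico, Finset.range_eq_Ico]
    linarith [h]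
  have hyconst : ∀ j ∈ Finset.Ico p (i+1), yw n d j = yw n d i := by
    intro j hj
    rw [Finset.mem_Ico] at hj
    unfold yw
    rw [bstart_eq_of_between n d hj.1 (by omega)]
  have hsum : ∑ j ∈ Finset.Ico p (i+1), (d j - yw n d j)
      = SI d p i - yw n d i * ((i - p + 1 : ℕ) : ℝ) := by
    rw [Finset.sum_sub_distrib, Finset.sum_congr rfl hyconst, Finset.sum_const,
      Nat.card_Ico, nsmul_eq_mul, Finset.Ico_add_one_right_eq_Icc]
    unfold SI
    have hc : ((i + 1 - p : ℕ) : ℝ) = ((i - p + 1 : ℕ) : ℝ) := by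
      congr 1
      omega
    rw [hc]
    ring
  linarith [hIco, hsum]

lemma TT_nonneg : ∀ k, k ≤ n → 0 ≤ TT n d k := by
  intro k
  induction k using Nat.strong_induction_on with
  | _ k ih =>
    intro hk
    match k with
    | 0 => simp [TT]
    | (i+1) =>
      have hi : i < n := by omega
      have hp : bstart n d i < n := bstart_lt n d i hi
      have h1 : 0 ≤ TT n d (bstart n d i) := ih _ (by have := bstart_le n d i; omega) (by omega)
      have h2 : minVal n d (bstart n d i) * ((i - bstart n d i + 1 : ℕ) : ℝ) ≤ SI d (bstart n d i) i :=
        minVal_mul_le n d hp (bstart_le n d i) hi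
      rw [TT_succ_eq n d i hi]
      unfold yw
      linarith

lemma TT_zero_at : ∀ k, k ≤ n → (k = n ∨ bstart n d k = k) → TT n d k = 0 := by
  intro k
  induction k using Nat.strong_induction_on with
  | _ k ih =>
    intro hk hor
    match k with
    | 0 => simp [TT]
    | (i+1) =>
      have hi : i < n := by omega
      set p := bstart n d i with hp
      have hpn : p < n := bstart_lt n d i hi
      have hee : ee n d p = i := by
        rcases hor with h | h
        · have h1 : ee n d p ≤ n - 1 := by
            have := (ee_spec n d hpn).2.1
            omega
          have h2 : i ≤ ee n d p := by
            rw [hp]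
            exact le_ee_bstart n d i hi
          omega
        · by_cases hc : ee n d p ≤ i
          · exact le_antisymm hc (le_ee_bstart n d i hi)
          · exfalso
            rw [bstart_succ, if_neg hc] at h
            have := bstart_le n d i
            omega
      have hSI : SI d p i = yw n d i * ((i - p + 1 : ℕ) : ℝ) := by
        have := SI_ee_eq n d hpn
        rw [hee] at this
        rw [this]
        rfl
      rw [TT_succ_eq n d i hi, hSI]
      have : TT n d p = 0 := ih p (by have := bstart_le n d i; omega) (by omega)
        (Or.inr (bstart_bstart n d i))
      rw [this]
      ring

lemma TT_n : TT n d n = 0 := by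
  rcases Nat.eq_zero_or_pos n with h | h
  · simp [h, TT]
  · exact TT_zero_at n d n le_rfl (Or.inl rfl)

lemma TT_jump {k : ℕ} (hk : 0 < k) (hkn : k < n) (hjump : yw n d (k-1) ≠ yw n d k) :
    TT n d k = 0 := by
  obtain ⟨i, rfl⟩ : ∃ i, k = i + 1 := ⟨k - 1, by omega⟩
  apply TT_zero_at n d (i+1) (by omega)
  right
  by_cases hc : ee n d (bstart n d i) ≤ i
  · rw [bstart_succ, if_pos hc]
  · exfalso
    apply hjump
    simp only [Nat.add_sub_cancel]
    unfold yw
    rw [bstart_succ, if_neg hc]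

lemma minVal_mem (hd : ∀ j, j < n → 0 ≤ d j ∧ d j ≤ 1) {p : ℕ} (hp : p < n) :
    0 ≤ minVal n d p ∧ minVal n d p ≤ 1 := by
  obtain ⟨h1, h2, h3⟩ := ee_spec n d hp
  rw [← h3, Av]
  have hlen := len_pos (s := p) (t := ee n d p) h1
  constructor
  · apply div_nonneg _ hlen.le
    apply Finset.sum_nonneg
    intro j hj
    rw [Finset.mem_Icc] at hj
    exact (hd j (by omega)).1
  · rw [div_le_one hlen]
    calc ∑ j ∈ Finset.Icc p (ee n d p), d j ≤ ∑ j ∈ Finset.Icc p (ee n d p), 1 := by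
          apply Finset.sum_le_sum
          intro j hj
          rw [Finset.mem_Icc] at hj
          exact (hd j (by omega)).2
      _ = ((ee n d p - p + 1 : ℕ) : ℝ) := by
          rw [Finset.sum_const, Nat.card_Icc, nsmul_eq_mul, mul_one]
          congr 1
          omega

lemma yw_pos (hd : ∀ j, j < n → 0 ≤ d j ∧ d j ≤ 1) {i : ℕ} (hi : i < n) (hdi : d i = 1) :
    0 < yw n d i := by
  set p := bstart n d i with hp
  have hpn : p < n := bstart_lt n d i hi
  obtain ⟨h1, h2, h3⟩ := ee_spec n d hpn
  have hmem : i ∈ Finset.Icc p (ee n d p) :=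
    Finset.mem_Icc.mpr ⟨bstart_le n d i, le_ee_bstart n d i hi⟩
  have hSI : (1:ℝ) ≤ SI d p (ee n d p) := by
    rw [SI, ← hdi]
    apply Finset.single_le_sum _ hmem
    intro j hj
    rw [Finset.mem_Icc] at hj
    exact (hd j (by omega)).1
  unfold yw
  rw [← h3, Av]
  positivity

lemma yw_lt_one (hd : ∀ j, j < n → 0 ≤ d j ∧ d j ≤ 1) {i : ℕ} (hi : i < n) (hdi : d i = 0) :
    yw n d i < 1 := by
  set p := bstart n d i with hp
  have hpn : p < n := bstart_lt n d i hi
  obtain ⟨h1, h2, h3⟩ := ee_spec n d hpn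
  have hmem : i ∈ Finset.Icc p (ee n d p) :=
    Finset.mem_Icc.mpr ⟨bstart_le n d i, le_ee_bstart n d i hi⟩
  have hlen := len_pos (s := p) (t := ee n d p) h1
  have hSI : SI d p (ee n d p) < ((ee n d p - p + 1 : ℕ) : ℝ) := by
    rw [SI]
    calc ∑ j ∈ Finset.Icc p (ee n d p), d j < ∑ j ∈ Finset.Icc p (ee n d p), 1 := by
          apply Finset.sum_lt_sum
          · intro j hj
            rw [Finset.mem_Icc] at hj
            exact (hd j (by omega)).2
          · exact ⟨i, hmem, by rw [hdi]; norm_num⟩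
      _ = ((ee n d p - p + 1 : ℕ) : ℝ) := by
          rw [Finset.sum_const, Nat.card_Icc, nsmul_eq_mul, mul_one]
          congr 1
          omega
  unfold yw
  rw [← h3, Av, div_lt_one hlen]
  exact hSI

noncomputable def Hent (p : ℝ) : ℝ := p * Real.log p + (1 - p) * Real.log (1 - p)

lemma gibbs {p q : ℝ} (hp0 : 0 ≤ p) (hp1 : p ≤ 1) (hq0 : 0 < q) (hq1 : q < 1) :
    (p * Real.log q + (1 - p) * Real.log (1 - q) ≤ Hent p) ∧
    (p ≠ q → p * Real.log q + (1 - p) * Real.log (1 - q) < Hent p) := by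
  rcases eq_or_lt_of_le hp0 with h0 | h0
  · have hH : Hent p = 0 := by simp [Hent, ← h0]
    have hlt : Real.log (1 - q) < 0 := Real.log_neg (by linarith) (by linarith)
    constructor
    · rw [hH, ← h0]
      linarith
    · intro _
      rw [hH, ← h0]
      linarith
  rcases eq_or_lt_of_le hp1 with h1 | h1
  · have hH : Hent p = 0 := by simp [Hent, h1]
    have hlt : Real.log q < 0 := Real.log_neg hq0 hq1
    constructor
    · rw [hH, h1]
      simp
      linarith
    · intro _
      rw [hH, h1]
      simp
      linarith
  · have key : ∀ x y : ℝ, 0 < x → 0 < y → x * (Real.log y - Real.log x) ≤ y - x := by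
      intro x y hx hy
      have h := Real.log_le_sub_one_of_pos (show 0 < y / x by positivity)
      rw [Real.log_div hy.ne' hx.ne'] at h
      have : x * (Real.log y - Real.log x) ≤ x * (y / x - 1) := by
        apply mul_le_mul_of_nonneg_left h hx.le
      calc x * (Real.log y - Real.log x) ≤ x * (y / x - 1) := this
        _ = y - x := by field_simp
    have keys : ∀ x y : ℝ, 0 < x → 0 < y → y ≠ x → x * (Real.log y - Real.log x) < y - x := by
      intro x y hx hy hne
      have hne' : y / x ≠ 1 := by
        intro h
        apply hne
        field_simp at h
        linarith
      have h := Real.log_lt_sub_one_of_pos (show 0 < y / x by positivity) hne'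
      rw [Real.log_div hy.ne' hx.ne'] at h
      have : x * (Real.log y - Real.log x) < x * (y / x - 1) := by
        apply mul_lt_mul_of_pos_left h hx
      calc x * (Real.log y - Real.log x) < x * (y / x - 1) := this
        _ = y - x := by field_simp
    have e1 := key p q h0 hq0
    have e2 := key (1-p) (1-q) (by linarith) (by linarith)
    constructor
    · unfold Hent
      nlinarith [e1, e2]
    · intro hne
      have e1' := keys p q h0 hq0 (fun h => hne h.symm)
      unfold Hent
      nlinarith [e1', e2]

lemma abel (c z : ℕ → ℝ) (m : ℕ) :
    ∑ i ∈ Finset.range (m+1), c i * z i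
      = ∑ k ∈ Finset.range m, (∑ j ∈ Finset.range (k+1), c j) * (z k - z (k+1))
        + (∑ j ∈ Finset.range (m+1), c j) * z m := by
  induction m with
  | zero => simp
  | succ m ih =>
    rw [Finset.sum_range_succ (fun i => c i * z i), ih,
      Finset.sum_range_succ (fun k => (∑ j ∈ Finset.range (k+1), c j) * (z k - z (k+1))),
      Finset.sum_range_succ c (m+1)]
    ring

noncomputable def clmp (ε x : ℝ) : ℝ := max ε (min x (1-ε))

lemma clmp_mem {ε x : ℝ} (hε : 0 < ε) (hε2 : ε ≤ 1/2) : 0 < clmp ε x ∧ clmp ε x < 1 := by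
  unfold clmp
  constructor
  · exact lt_max_of_lt_left hε
  · apply max_lt (by linarith)
    apply lt_of_le_of_lt (min_le_right _ _)
    linarith

lemma clmp_mono {ε : ℝ} : Monotone (clmp ε) := by
  intro a b hab
  unfold clmp
  exact max_le_max le_rfl (min_le_min hab le_rfl)

lemma keyterm {dd p q ε : ℝ} (hp0 : 0 ≤ p) (hp1 : p ≤ 1)
    (hq0 : 0 ≤ q) (hq1 : q ≤ 1) (hd1 : dd = 1 → 0 < q) (hd0 : dd = 0 → q < 1)
    (hdd : dd = 0 ∨ dd = 1)
    (hε : 0 < ε) (hε2 : ε ≤ 1/2) (hεq : 0 < q → ε ≤ q) (hεq' : q < 1 → ε ≤ 1 - q)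
    (hp3 : 0 < p → 1 - Hent p + p * Real.log 2 ≤ p * (- Real.log ε))
    (hp4 : p < 1 → 1 - Hent p + (1-p) * Real.log 2 ≤ (1-p) * (- Real.log ε)) :
    (dd * Real.log q + (1 - dd) * Real.log (1 - q)
      ≤ (dd - p) * (Real.log (clmp ε q) - Real.log (1 - clmp ε q)) + Hent p)
    ∧ (q ≠ p → dd * Real.log q + (1 - dd) * Real.log (1 - q)
      < (dd - p) * (Real.log (clmp ε q) - Real.log (1 - clmp ε q)) + Hent p) := by
  have hl2 : (0:ℝ) ≤ Real.log (1 - ε) + Real.log 2 := by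
    rw [← Real.log_mul (by linarith) (by norm_num)]
    apply Real.log_nonneg
    nlinarith
  rcases eq_or_lt_of_le hq0 with h0 | h0
  · -- q = 0
    have hdd0 : dd = 0 := by
      rcases hdd with h | h
      · exact h
      · exact absurd (hd1 h) (by rw [← h0]; simp)
    have hcl : clmp ε q = ε := by
      unfold clmp
      rw [← h0]
      rw [min_eq_left (by linarith)]
      exact max_eq_left (by linarith)
    have hLHS : dd * Real.log q + (1 - dd) * Real.log (1 - q) = 0 := by
      rw [hdd0, ← h0]
      simp
    rcases eq_or_lt_of_le hp0 with hp | hp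
    · -- p = 0 : equality, q = p
      have hH : Hent p = 0 := by simp [Hent, ← hp]
      constructor
      · rw [hLHS, hcl, hdd0, hH, ← hp]
        simp
      · intro hne
        exact absurd (h0 ▸ hp ▸ rfl : q = p) hne
    · -- p > 0 : strict
      have hkey : 1 ≤ (dd - p) * (Real.log ε - Real.log (1 - ε)) + Hent p := by
        rw [hdd0]
        have h3 := hp3 hp
        have : (0 - p) * (Real.log ε - Real.log (1 - ε))
            = p * (- Real.log ε) + p * Real.log (1 - ε) := by ring
        rw [this]
        nlinarith [mul_nonneg hp.le hl2]
      constructor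
      · rw [hLHS, hcl]
        linarith
      · intro _
        rw [hLHS, hcl]
        linarith
  rcases eq_or_lt_of_le hq1 with h1 | h1
  · -- q = 1
    have hdd1 : dd = 1 := by
      rcases hdd with h | h
      · exact absurd (hd0 h) (by rw [h1]; simp)
      · exact h
    have hcl : clmp ε q = 1 - ε := by
      unfold clmp
      rw [h1]
      rw [min_eq_right (by linarith)]
      exact max_eq_right (by linarith)
    have hLHS : dd * Real.log q + (1 - dd) * Real.log (1 - q) = 0 := by
      rw [hdd1, h1]
      simp
    have hcl2 : (1 : ℝ) - (1 - ε) = ε := by ring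
    rcases eq_or_lt_of_le hp1 with hp | hp
    · -- p = 1
      have hH : Hent p = 0 := by simp [Hent, hp]
      constructor
      · rw [hLHS, hcl, hdd1, hH, hp, hcl2]
        simp
      · intro hne
        exact absurd (h1 ▸ hp ▸ rfl : q = p) hne
    · have hkey : 1 ≤ (dd - p) * (Real.log (1 - ε) - Real.log ε) + Hent p := by
        rw [hdd1]
        have h4 := hp4 hp
        have : (1 - p) * (Real.log (1 - ε) - Real.log ε)
            = (1 - p) * (- Real.log ε) + (1 - p) * Real.log (1 - ε) := by ring
        rw [this]
        nlinarith [mul_nonneg (by linarith : (0:ℝ) ≤ 1 - p) hl2]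
      constructor
      · rw [hLHS, hcl, hcl2]
        linarith
      · intro _
        rw [hLHS, hcl, hcl2]
        linarith
  · -- 0 < q < 1
    have hcl : clmp ε q = q := by
      unfold clmp
      rw [min_eq_left (by linarith [hεq' h1])]
      exact max_eq_right (hεq h0)
    have hg := gibbs hp0 hp1 h0 h1
    have hid : ∀ A B : ℝ, dd * A + (1 - dd) * B - (dd - p) * (A - B)
        = p * A + (1 - p) * B := by
      intro A B
      ring
    constructor
    · rw [hcl]
      have := hg.1
      nlinarith [hid (Real.log q) (Real.log (1 - q))]
    · intro hne
      rw [hcl]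
      have := hg.2 (fun h => hne h.symm)
      nlinarith [hid (Real.log q) (Real.log (1 - q))]

lemma coe_finset_sum {α : Type*} (s : Finset α) (f : α → ℝ) :
    ((∑ i ∈ s, f i : ℝ) : EReal) = ∑ i ∈ s, ((f i : ℝ) : EReal) := by
  induction s using Finset.cons_induction with
  | empty => simp
  | cons a s ha ih => rw [Finset.sum_cons, Finset.sum_cons, EReal.coe_add, ih]

end CSAux



/-- Current status model: the isotonic regression `yhat` of the indicators `δ`
(the least squares estimator) is also the unique maximizer of the extended-real-valued
log likelihood over nondecreasing vectors with values in `[0,1]`; i.e. the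
nonparametric MLE and the nonparametric LS estimator coincide. -/
theorem stmt1 (n : ℕ) (hn : 1 ≤ n) (δ : Fin n → ℝ) (hδ : ∀ i, δ i = 0 ∨ δ i = 1)
    (yhat : Fin n → ℝ)
    (hyhat : ∀ i : Fin n, yhat i =
      (Finset.Iic i).sup' ⟨i, Finset.mem_Iic.mpr le_rfl⟩ (fun s =>
        (Finset.Ici i).inf' ⟨i, Finset.mem_Ici.mpr le_rfl⟩ (fun t =>
          (∑ j ∈ Finset.Icc s t, δ j) / (((t : ℕ) - (s : ℕ) + 1 : ℕ) : ℝ))))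
    (ℓ : (Fin n → ℝ) → EReal)
    (hℓ : ∀ y : Fin n → ℝ, ℓ y =
      ∑ i, (((δ i : ℝ) : EReal) *
              (if y i = 0 then (⊥ : EReal) else ((Real.log (y i) : ℝ) : EReal))
            + (((1 - δ i : ℝ)) : EReal) *
              (if y i = 1 then (⊥ : EReal) else ((Real.log (1 - y i) : ℝ) : EReal)))) :
    Monotone yhat ∧ (∀ i, yhat i ∈ Set.Icc (0 : ℝ) 1) ∧
      (∀ y : Fin n → ℝ, Monotone y → (∀ i, y i ∈ Set.Icc (0 : ℝ) 1) →
        ℓ y ≤ ℓ yhat ∧ (ℓ y = ℓ yhat → y = yhat)) := by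
  classical
  set d : ℕ → ℝ := fun k => if h : k < n then δ ⟨k, h⟩ else 0 with hd_def
  have hdval : ∀ i : Fin n, d i.val = δ i := by
    intro i
    simp only [hd_def, i.isLt, dif_pos, Fin.eta]
  have hd : ∀ j, j < n → 0 ≤ d j ∧ d j ≤ 1 := by
    intro j hj
    have h := hδ ⟨j, hj⟩
    simp only [hd_def, dif_pos hj]
    rcases h with h | h <;> rw [h] <;> norm_num
  have hSIsum : ∀ s t : Fin n, (∑ j ∈ Finset.Icc s t, δ j) = CSAux.SI d s.val t.val := by
    intro s t
    rw [CSAux.SI, ← Fin.map_valEmbedding_Icc, Finset.sum_map]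
    apply Finset.sum_congr rfl
    intro j _
    exact (hdval j).symm
  have hAv : ∀ s t : Fin n, ((∑ j ∈ Finset.Icc s t, δ j) / (((t : ℕ) - (s : ℕ) + 1 : ℕ) : ℝ))
      = CSAux.Av d s.val t.val := by
    intro s t
    rw [hSIsum]
    rfl
  have hyw : ∀ i : Fin n, yhat i = CSAux.yw n d i.val := by
    intro i
    have hin : i.val < n := i.isLt
    have hbn : CSAux.bstart n d i.val < n := CSAux.bstart_lt n d i.val hin
    have hEspec := CSAux.ee_spec n d hbn
    have hiE : i.val ≤ CSAux.ee n d (CSAux.bstart n d i.val) := CSAux.le_ee_bstart n d i.val hin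
    have hEn : CSAux.ee n d (CSAux.bstart n d i.val) < n := hEspec.2.1
    apply le_antisymm
    · rw [hyhat i]
      apply Finset.sup'_le
      intro s hs
      have hsi : s.val ≤ i.val := Fin.le_def.mp (Finset.mem_Iic.mp hs)
      refine le_trans (Finset.inf'_le _ (Finset.mem_Ici.mpr
        (show i ≤ (⟨CSAux.ee n d (CSAux.bstart n d i.val), hEn⟩ : Fin n) from by
          rw [Fin.le_def]; exact hiE))) ?_
      rw [hAv s ⟨CSAux.ee n d (CSAux.bstart n d i.val), hEn⟩]
      rw [CSAux.Av_le_iff d (le_trans hsi hiE)]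
      exact CSAux.keyUB n d (CSAux.ee n d (CSAux.bstart n d i.val) - s.val) i.val s.val hin hsi le_rfl
    · rw [hyhat i]
      have hbmem : (⟨CSAux.bstart n d i.val, hbn⟩ : Fin n) ∈ Finset.Iic i :=
        Finset.mem_Iic.mpr (by rw [Fin.le_def]; exact CSAux.bstart_le n d i.val)
      refine le_trans ?_ (Finset.le_sup' _ hbmem)
      apply Finset.le_inf'
      intro t ht
      have hit : i.val ≤ t.val := Fin.le_def.mp (Finset.mem_Ici.mp ht)
      rw [hAv _ t]
      exact CSAux.minVal_le n d hbn (le_trans (CSAux.bstart_le n d i.val) hit) t.isLt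
  have hmono : Monotone yhat := by
    intro i j hij
    rw [hyw i, hyw j]
    exact CSAux.yw_mono n d hij j.isLt
  have hbdd : ∀ i, yhat i ∈ Set.Icc (0 : ℝ) 1 := by
    intro i
    rw [hyw i]
    exact CSAux.minVal_mem n d hd (CSAux.bstart_lt n d i.val i.isLt)
  have hyhat_pos : ∀ i : Fin n, δ i = 1 → 0 < yhat i := by
    intro i h
    rw [hyw i]
    exact CSAux.yw_pos n d hd i.isLt ((hdval i).trans h)
  have hyhat_lt1 : ∀ i : Fin n, δ i = 0 → yhat i < 1 := by
    intro i h
    rw [hyw i]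
    exact CSAux.yw_lt_one n d hd i.isLt ((hdval i).trans h)
  have hyhatgood : ∀ i, (δ i = 1 → yhat i ≠ 0) ∧ (δ i = 0 → yhat i ≠ 1) := by
    intro i
    exact ⟨fun h => (hyhat_pos i h).ne', fun h => (hyhat_lt1 i h).ne⟩
  have hLeval : ∀ v : Fin n → ℝ, (∀ i, (δ i = 1 → v i ≠ 0) ∧ (δ i = 0 → v i ≠ 1)) →
      ℓ v = ((∑ i, (δ i * Real.log (v i) + (1 - δ i) * Real.log (1 - v i)) : ℝ) : EReal) := by
    intro v hv
    rw [hℓ v, CSAux.coe_finset_sum]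
    apply Finset.sum_congr rfl
    intro i _
    rcases hδ i with h | h
    · have hne : v i ≠ 1 := (hv i).2 h
      rw [h, if_neg hne]
      rw [show ((0:ℝ) * Real.log (v i) + (1 - 0) * Real.log (1 - v i)) = Real.log (1 - v i) by ring]
      rw [show ((1:ℝ) - 0) = (1:ℝ) by ring]
      simp only [EReal.coe_zero, zero_mul, zero_add, EReal.coe_one, one_mul]
    · have hne : v i ≠ 0 := (hv i).1 h
      rw [h, if_neg hne]
      rw [show ((1:ℝ) * Real.log (v i) + (1 - 1) * Real.log (1 - v i)) = Real.log (v i) by ring]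
      rw [show ((1:ℝ) - 1) = (0:ℝ) by ring]
      simp only [EReal.coe_zero, zero_mul, add_zero, EReal.coe_one, one_mul]
  refine ⟨hmono, hbdd, ?_⟩
  intro y hymono hybnd
  by_cases hgood : ∀ i, (δ i = 1 → y i ≠ 0) ∧ (δ i = 0 → y i ≠ 1)
  case neg =>
    have hbot : ℓ y = ⊥ := by
      rw [not_forall] at hgood
      obtain ⟨i0, hi0⟩ := hgood
      rw [hℓ y, ← Finset.add_sum_erase _ _ (Finset.mem_univ i0)]
      have hterm : (((δ i0 : ℝ) : EReal) *
              (if y i0 = 0 then (⊥ : EReal) else ((Real.log (y i0) : ℝ) : EReal))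
            + (((1 - δ i0 : ℝ)) : EReal) *
              (if y i0 = 1 then (⊥ : EReal) else ((Real.log (1 - y i0) : ℝ) : EReal))) = ⊥ := by
        rcases hδ i0 with h | h
        · have hy1 : y i0 = 1 := by
            by_contra hy
            exact hi0 ⟨fun h1 => absurd (h.symm.trans h1) (by norm_num), fun _ => hy⟩
          have hy0 : y i0 ≠ 0 := by rw [hy1]; norm_num
          rw [h, if_pos hy1, if_neg hy0]
          rw [show ((1:ℝ) - 0) = (1:ℝ) by ring]
          simp only [EReal.coe_zero, zero_mul, zero_add, EReal.coe_one, one_mul]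
        · have hy0 : y i0 = 0 := by
            by_contra hy
            exact hi0 ⟨fun _ => hy, fun h0 => absurd (h.symm.trans h0) (by norm_num)⟩
          have hy1 : y i0 ≠ 1 := by rw [hy0]; norm_num
          rw [h, if_pos hy0, if_neg hy1]
          rw [show ((1:ℝ) - 1) = (0:ℝ) by ring]
          simp only [EReal.coe_zero, zero_mul, EReal.coe_one, one_mul]
          rw [EReal.bot_add]
      rw [hterm, EReal.bot_add]
    constructor
    · rw [hbot]
      exact bot_le
    · intro heq
      rw [hbot, hLeval yhat hyhatgood] at heq
      exact absurd heq.symm (EReal.coe_ne_bot _)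
  case pos =>
    have hy0 : ∀ i, 0 ≤ y i := fun i => (hybnd i).1
    have hy1 : ∀ i, y i ≤ 1 := fun i => (hybnd i).2
    have hq1 : ∀ i, δ i = 1 → 0 < y i :=
      fun i h => lt_of_le_of_ne (hy0 i) (Ne.symm ((hgood i).1 h))
    have hq0 : ∀ i, δ i = 0 → y i < 1 :=
      fun i h => lt_of_le_of_ne (hy1 i) ((hgood i).2 h)
    haveI : Nonempty (Fin n) := ⟨⟨0, hn⟩⟩
    set g : Fin n → ℝ := fun i => min
      (min (if 0 < y i then y i else 1) (if y i < 1 then 1 - y i else 1))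
      (min (if 0 < yhat i then
              Real.exp (-((1 - CSAux.Hent (yhat i) + yhat i * Real.log 2) / yhat i)) else 1)
           (if yhat i < 1 then
              Real.exp (-((1 - CSAux.Hent (yhat i) + (1 - yhat i) * Real.log 2) / (1 - yhat i)))
            else 1)) with hg_def
    have hgpos : ∀ i, 0 < g i := by
      intro i
      refine lt_min (lt_min ?_ ?_) (lt_min ?_ ?_)
      · split
        · assumption
        · norm_num
      · split
        · linarith
        · norm_num
      · split
        · positivity
        · norm_num
      · split
        · positivity
        · norm_num
    set ε : ℝ := min (1/2) (Finset.univ.inf' Finset.univ_nonempty g) with hε_def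
    have hεpos : 0 < ε := lt_min (by norm_num) (Finset.lt_inf'_iff _ |>.mpr fun i _ => hgpos i)
    have hεhalf : ε ≤ 1/2 := min_le_left _ _
    have hεg : ∀ i, ε ≤ g i :=
      fun i => le_trans (min_le_right _ _) (Finset.inf'_le _ (Finset.mem_univ i))
    have hεy : ∀ i : Fin n, 0 < y i → ε ≤ y i := by
      intro i h
      refine le_trans (hεg i) (le_trans (min_le_left _ _) (le_trans (min_le_left _ _) ?_))
      rw [if_pos h]
    have hεy' : ∀ i : Fin n, y i < 1 → ε ≤ 1 - y i := by
      intro i h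
      refine le_trans (hεg i) (le_trans (min_le_left _ _) (le_trans (min_le_right _ _) ?_))
      rw [if_pos h]
    have hp3 : ∀ i : Fin n, 0 < yhat i →
        1 - CSAux.Hent (yhat i) + yhat i * Real.log 2 ≤ yhat i * (- Real.log ε) := by
      intro i h
      have hle : ε ≤ Real.exp (-((1 - CSAux.Hent (yhat i) + yhat i * Real.log 2) / yhat i)) := by
        refine le_trans (hεg i) (le_trans (min_le_right _ _) (le_trans (min_le_left _ _) ?_))
        rw [if_pos h]
      have hlog : Real.log ε ≤ -((1 - CSAux.Hent (yhat i) + yhat i * Real.log 2) / yhat i) := by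
        have := Real.log_le_log hεpos hle
        rwa [Real.log_exp] at this
      have h2 : (1 - CSAux.Hent (yhat i) + yhat i * Real.log 2) / yhat i ≤ - Real.log ε := by
        linarith
      calc 1 - CSAux.Hent (yhat i) + yhat i * Real.log 2
          = ((1 - CSAux.Hent (yhat i) + yhat i * Real.log 2) / yhat i) * yhat i := by
            field_simp
        _ ≤ (- Real.log ε) * yhat i := mul_le_mul_of_nonneg_right h2 h.le
        _ = yhat i * (- Real.log ε) := mul_comm _ _
    have hp4 : ∀ i : Fin n, yhat i < 1 →
        1 - CSAux.Hent (yhat i) + (1 - yhat i) * Real.log 2 ≤ (1 - yhat i) * (- Real.log ε) := by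
      intro i h
      have hle : ε ≤ Real.exp (-((1 - CSAux.Hent (yhat i) + (1 - yhat i) * Real.log 2) / (1 - yhat i))) := by
        refine le_trans (hεg i) (le_trans (min_le_right _ _) (le_trans (min_le_right _ _) ?_))
        rw [if_pos h]
      have hlog : Real.log ε ≤ -((1 - CSAux.Hent (yhat i) + (1 - yhat i) * Real.log 2) / (1 - yhat i)) := by
        have := Real.log_le_log hεpos hle
        rwa [Real.log_exp] at this
      have h2 : (1 - CSAux.Hent (yhat i) + (1 - yhat i) * Real.log 2) / (1 - yhat i) ≤ - Real.log ε := by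
        linarith
      have h1p : (0:ℝ) < 1 - yhat i := by linarith
      calc 1 - CSAux.Hent (yhat i) + (1 - yhat i) * Real.log 2
          = ((1 - CSAux.Hent (yhat i) + (1 - yhat i) * Real.log 2) / (1 - yhat i)) * (1 - yhat i) := by
            field_simp
        _ ≤ (- Real.log ε) * (1 - yhat i) := mul_le_mul_of_nonneg_right h2 h1p.le
        _ = (1 - yhat i) * (- Real.log ε) := mul_comm _ _
    have hbnds : ∀ i : Fin n,
        (δ i * Real.log (y i) + (1 - δ i) * Real.log (1 - y i)
          ≤ (δ i - yhat i) * (Real.log (CSAux.clmp ε (y i)) - Real.log (1 - CSAux.clmp ε (y i)))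
            + CSAux.Hent (yhat i))
        ∧ (y i ≠ yhat i → δ i * Real.log (y i) + (1 - δ i) * Real.log (1 - y i)
          < (δ i - yhat i) * (Real.log (CSAux.clmp ε (y i)) - Real.log (1 - CSAux.clmp ε (y i)))
            + CSAux.Hent (yhat i)) := by
      intro i
      exact CSAux.keyterm (hbdd i).1 (hbdd i).2 (hy0 i) (hy1 i) (hq1 i) (hq0 i) (hδ i)
        hεpos hεhalf (hεy i) (hεy' i) (hp3 i) (hp4 i)
    set yn : ℕ → ℝ := fun k => if h : k < n then y ⟨k, h⟩ else 1 with hyn_def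
    have hynval : ∀ i : Fin n, yn i.val = y i := by
      intro i
      simp only [hyn_def, i.isLt, dif_pos, Fin.eta]
    set c : ℕ → ℝ := fun k => d k - CSAux.yw n d k with hc_def
    set z : ℕ → ℝ :=
      fun k => Real.log (CSAux.clmp ε (yn k)) - Real.log (1 - CSAux.clmp ε (yn k)) with hz_def
    set wz : ℕ → ℝ :=
      fun k => Real.log (CSAux.yw n d k) - Real.log (1 - CSAux.yw n d k) with hwz_def
    have hTTc : ∀ k, (∑ j ∈ Finset.range k, c j) = CSAux.TT n d k := by
      intro k
      rfl
    obtain ⟨m, hm⟩ : ∃ m, n = m + 1 := ⟨n - 1, by omega⟩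
    have habel1 : ∑ k ∈ Finset.range n, c k * z k ≤ 0 := by
      rw [hm, CSAux.abel c z m]
      have hlast : (∑ j ∈ Finset.range (m+1), c j) = 0 := by
        rw [hTTc, ← hm]
        exact CSAux.TT_n n d
      rw [hlast, zero_mul, add_zero]
      apply Finset.sum_nonpos
      intro k hk
      rw [Finset.mem_range] at hk
      rw [hTTc]
      have h1 : 0 ≤ CSAux.TT n d (k+1) := CSAux.TT_nonneg n d (k+1) (by omega)
      have h2 : z k ≤ z (k+1) := by
        have hk1 : k + 1 < n := by omega
        have hkn : k < n := by omega
        have hyk : yn k ≤ yn (k+1) := by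
          simp only [hyn_def, dif_pos hk1, dif_pos hkn]
          exact hymono (by simp [Fin.le_def])
        have hcl := CSAux.clmp_mono (ε := ε) hyk
        have ha := CSAux.clmp_mem (x := yn k) hεpos hεhalf
        have hb := CSAux.clmp_mem (x := yn (k+1)) hεpos hεhalf
        simp only [hz_def]
        have l1 : Real.log (CSAux.clmp ε (yn k)) ≤ Real.log (CSAux.clmp ε (yn (k+1))) :=
          Real.log_le_log ha.1 hcl
        have l2 : Real.log (1 - CSAux.clmp ε (yn (k+1))) ≤ Real.log (1 - CSAux.clmp ε (yn k)) :=
          Real.log_le_log (by linarith [hb.2]) (by linarith)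
        linarith
      have := mul_nonneg h1 (sub_nonneg.mpr h2)
      nlinarith [this]
    have habel2 : ∑ k ∈ Finset.range n, c k * wz k = 0 := by
      rw [hm, CSAux.abel c wz m]
      have hlast : (∑ j ∈ Finset.range (m+1), c j) = 0 := by
        rw [hTTc, ← hm]
        exact CSAux.TT_n n d
      rw [hlast, zero_mul, add_zero]
      apply Finset.sum_eq_zero
      intro k hk
      rw [Finset.mem_range] at hk
      by_cases hjump : CSAux.yw n d k = CSAux.yw n d (k+1)
      · simp only [hwz_def]
        rw [hjump]
        ring
      · rw [hTTc, CSAux.TT_jump n d (by omega : 0 < k+1) (by omega : k+1 < n)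
          (by simpa using hjump), zero_mul]
    have hconv1 : ∑ i : Fin n, ((δ i - yhat i) *
        (Real.log (CSAux.clmp ε (y i)) - Real.log (1 - CSAux.clmp ε (y i))))
        = ∑ k ∈ Finset.range n, c k * z k := by
      rw [← Fin.sum_univ_eq_sum_range (fun k => c k * z k) n]
      apply Finset.sum_congr rfl
      intro i _
      simp only [hc_def, hz_def, hdval i, hynval i, ← hyw i]
    have hconv2 : ∑ i : Fin n, ((δ i - yhat i) * (Real.log (yhat i) - Real.log (1 - yhat i)))
        = ∑ k ∈ Finset.range n, c k * wz k := by
      rw [← Fin.sum_univ_eq_sum_range (fun k => c k * wz k) n]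
      apply Finset.sum_congr rfl
      intro i _
      simp only [hc_def, hwz_def, hdval i, ← hyw i]
    have hLyhat : (∑ i, (δ i * Real.log (yhat i) + (1 - δ i) * Real.log (1 - yhat i)))
        = ∑ i, ((δ i - yhat i) * (Real.log (yhat i) - Real.log (1 - yhat i)))
          + ∑ i, CSAux.Hent (yhat i) := by
      rw [← Finset.sum_add_distrib]
      apply Finset.sum_congr rfl
      intro i _
      rw [CSAux.Hent]
      ring
    have hQ2 : ∑ i, ((δ i - yhat i) *
        (Real.log (CSAux.clmp ε (y i)) - Real.log (1 - CSAux.clmp ε (y i)))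
          + CSAux.Hent (yhat i))
        ≤ ∑ i, (δ i * Real.log (yhat i) + (1 - δ i) * Real.log (1 - yhat i)) := by
      rw [Finset.sum_add_distrib, hconv1, hLyhat, hconv2, habel2, zero_add]
      linarith [habel1]
    have hQ1 : ∑ i, (δ i * Real.log (y i) + (1 - δ i) * Real.log (1 - y i))
        ≤ ∑ i, ((δ i - yhat i) *
          (Real.log (CSAux.clmp ε (y i)) - Real.log (1 - CSAux.clmp ε (y i)))
          + CSAux.Hent (yhat i)) :=
      Finset.sum_le_sum (fun i _ => (hbnds i).1)
    constructor
    · rw [hLeval y hgood, hLeval yhat hyhatgood]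
      exact EReal.coe_le_coe_iff.mpr (le_trans hQ1 hQ2)
    · intro heq
      rw [hLeval y hgood, hLeval yhat hyhatgood] at heq
      have heqr := EReal.coe_eq_coe_iff.mp heq
      by_contra hne
      obtain ⟨i0, hi0⟩ : ∃ i0, y i0 ≠ yhat i0 := by
        by_contra hall
        push_neg at hall
        exact hne (funext hall)
      have hstrict : ∑ i, (δ i * Real.log (y i) + (1 - δ i) * Real.log (1 - y i))
          < ∑ i, ((δ i - yhat i) *
            (Real.log (CSAux.clmp ε (y i)) - Real.log (1 - CSAux.clmp ε (y i)))
            + CSAux.Hent (yhat i)) :=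
        Finset.sum_lt_sum (fun i _ => (hbnds i).1) ⟨i0, Finset.mem_univ i0, (hbnds i0).2 hi0⟩
      have := lt_of_lt_of_le hstrict hQ2
      rw [heqr] at this
      exact lt_irrefl _ this
end

section
/- Assume the 2n observation points u_1, …, u_n, v_1, …, v_n are pairwise distinct, and let t_1 < t_2 < … < t_{2n} be their ordering. Define responses r_k ∈ {0,1} by r_k = δ_{i0} if t_k = u_i and r_k = δ_{i0} + δ_{i1} if t_k = v_i. Then any minimizer F̂ ∈ 𝒟 of ψ₂ over 𝒟 satisfies, for every 1 ≤ k ≤ 2n, F̂(t_k) = max_{1 ≤ s ≤ k} min_{k ≤ m ≤ 2n} ( (Σ_{j=s}^{m} r_j) / (m − s + 1) ), i.e. the values of the simple least squares estimator at the observation points are the isotonic regression of r (the left-continuous slope of the greatest convex minorant of the cumulative sum diagram of the points (k, Σ_{j ≤ k} r_j)), and these values automatically lie in [0,1]. -/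
open Finset

namespace IC2

variable (N : ℕ) (R : ℕ → ℝ)

/-- affine minorants of the cusum diagram -/
def adm (p : ℝ × ℝ) : Prop := ∀ j ≤ N, p.1 * j + p.2 ≤ R j

/-- greatest convex minorant, as sup of affine minorants -/
noncomputable def C (k : ℕ) : ℝ :=
  sSup ((fun p : ℝ × ℝ => p.1 * k + p.2) '' {p | adm N R p})

/-- slope of GCM on [k, k+1] -/
noncomputable def sl (k : ℕ) : ℝ := C N R (k+1) - C N R k

lemma adm_nonempty (hN : 0 < N) : ∃ p : ℝ × ℝ, adm N R p := by
  refine ⟨(0, (Finset.range (N+1)).inf' (by simp) R), fun j hj => ?_⟩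
  simp only [zero_mul, zero_add]
  exact Finset.inf'_le _ (by simp [Nat.lt_succ_iff, hj])

lemma bddAbove_S {k : ℕ} (hk : k ≤ N) :
    BddAbove ((fun p : ℝ × ℝ => p.1 * k + p.2) '' {p | adm N R p}) := by
  refine ⟨R k, fun x hx => ?_⟩
  rcases hx with ⟨p, hp, rfl⟩
  exact hp k hk

lemma le_C {k : ℕ} (hk : k ≤ N) {p : ℝ × ℝ} (hp : adm N R p) :
    p.1 * k + p.2 ≤ C N R k :=
  le_csSup (bddAbove_S N R hk) ⟨p, hp, rfl⟩

lemma C_le {k : ℕ} (hN : 0 < N) (hk : k ≤ N) : C N R k ≤ R k := by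
  obtain ⟨p, hp⟩ := adm_nonempty N R hN
  refine csSup_le ⟨_, ⟨p, hp, rfl⟩⟩ ?_
  rintro x ⟨q, hq, rfl⟩
  exact hq k hk

lemma C_zero (hN : 0 < N) : C N R 0 = R 0 := by
  refine le_antisymm (C_le N R hN (Nat.zero_le _)) ?_
  have hne : (Finset.Icc 1 N).Nonempty := ⟨1, by simp only [Finset.mem_Icc]; omega⟩
  set α : ℝ := (Finset.Icc 1 N).inf' hne (fun j => (R j - R 0) / j) with hα
  have hadm : adm N R (α, R 0) := by
    intro j hj
    simp only
    rcases Nat.eq_zero_or_pos j with rfl | hj0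
    · simp
    · have h1 : α ≤ (R j - R 0) / j := Finset.inf'_le _ (by simp only [Finset.mem_Icc]; omega)
      have hjpos : (0:ℝ) < j := by exact_mod_cast hj0
      have := (div_le_div_iff_of_pos_right hjpos).mpr h1
      have h2 : α * j ≤ R j - R 0 := by
        calc α * j ≤ ((R j - R 0) / j) * j := by
              exact mul_le_mul_of_nonneg_right h1 hjpos.le
          _ = R j - R 0 := by field_simp
      simpa using by linarith [h2]
  have := le_C N R (Nat.zero_le N) hadm
  simpa using this

lemma C_last (hN : 0 < N) : C N R N = R N := by
  refine le_antisymm (C_le N R hN le_rfl) ?_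
  have hne : (Finset.range N).Nonempty := ⟨0, by simp [hN]⟩
  set α : ℝ := (Finset.range N).sup' hne (fun j => (R N - R j) / ((N:ℝ) - j)) with hα
  have hadm : adm N R (α, R N - α * N) := by
    intro j hj
    simp only
    rcases eq_or_lt_of_le hj with rfl | hjN
    · exact le_of_eq (by ring)
    · have h1 : (R N - R j) / ((N:ℝ) - j) ≤ α := by
        rw [hα]
        exact Finset.le_sup' (fun j : ℕ => (R N - R j) / ((N:ℝ) - j)) (Finset.mem_range.mpr hjN)
      have hpos : (0:ℝ) < (N:ℝ) - j := by
        have : (j:ℝ) < N := by exact_mod_cast hjN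
        linarith
      have h2 : R N - R j ≤ α * ((N:ℝ) - j) := by
        calc R N - R j = ((R N - R j) / ((N:ℝ) - j)) * ((N:ℝ) - j) := by field_simp
          _ ≤ α * ((N:ℝ) - j) := mul_le_mul_of_nonneg_right h1 hpos.le
      nlinarith [h2]
  have := le_C N R le_rfl hadm
  simp only at this
  linarith

lemma C_convex {k : ℕ} (hN : 0 < N) (h : k + 2 ≤ N) :
    2 * C N R (k+1) ≤ C N R k + C N R (k+2) := by
  obtain ⟨p0, hp0⟩ := adm_nonempty N R hN
  have : C N R (k+1) ≤ (C N R k + C N R (k+2)) / 2 := by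
    refine csSup_le ⟨_, ⟨p0, hp0, rfl⟩⟩ ?_
    rintro x ⟨p, hp, rfl⟩
    have h1 := le_C N R (show k ≤ N by omega) hp
    have h2 := le_C N R (show k + 2 ≤ N by omega) hp
    push_cast at *
    nlinarith [h1, h2]
  linarith

lemma sl_mono {i i' : ℕ} (hN : 0 < N) (h : i ≤ i') (h' : i' < N) :
    sl N R i ≤ sl N R i' := by
  induction i' with
  | zero =>
    have : i = 0 := by omega
    subst this; exact le_rfl
  | succ m ih =>
    rcases Nat.lt_or_ge i (m+1) with hlt | hge
    · have step : sl N R m ≤ sl N R (m+1) := by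
        have := C_convex N R hN (show m + 2 ≤ N by omega)
        unfold sl; linarith
      exact le_trans (ih (by omega) (by omega)) step
    · have : i = m + 1 := by omega
      subst this; rfl

lemma telescope {a b : ℕ} (h : a ≤ b) :
    C N R b - C N R a = ∑ i ∈ Finset.Ico a b, sl N R i := by
  induction b, h using Nat.le_induction with
  | base => simp
  | succ b hb ih =>
    rw [Finset.sum_Ico_succ_top hb]
    have hsl : sl N R b = C N R (b+1) - C N R b := rfl
    linarith [ih]

lemma kink {p : ℕ} (h : p + 2 ≤ N) (hC : C N R (p+1) < R (p+1)) :
    sl N R (p+1) ≤ sl N R p := by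
  by_contra hlt
  push_neg at hlt
  have hN : 0 < N := by omega
  set α : ℝ := (sl N R p + sl N R (p+1)) / 2 with hαdef
  have hα1 : sl N R p < α := by unfold α; linarith
  have hα2 : α < sl N R (p+1) := by unfold α; linarith
  set ε : ℝ := min (R (p+1) - C N R (p+1)) (min (sl N R (p+1) - α) (α - sl N R p)) with hεdef
  have hε : 0 < ε := by
    apply lt_min (by linarith)
    exact lt_min (by linarith) (by linarith)
  have hadm : adm N R (α, C N R (p+1) - α * (p+1) + ε) := by
    intro j hj
    simp only
    rcases lt_trichotomy j (p+1) with hjlt | hjeq | hjgt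
    · -- j ≤ p : use left-slope bound
      have hab : j ≤ p + 1 := by omega
      have htel : C N R (p+1) - C N R j = ∑ i ∈ Finset.Ico j (p+1), sl N R i :=
        telescope N R hab
      have hsum : ∑ i ∈ Finset.Ico j (p+1), sl N R i ≤ (Finset.Ico j (p+1)).card • sl N R p := by
        apply Finset.sum_le_card_nsmul
        intro i hi
        simp only [Finset.mem_Ico] at hi
        exact sl_mono N R hN (by omega) (by omega)
      have hcard : ((Finset.Ico j (p+1)).card : ℝ) = (p+1 : ℝ) - j := by
        rw [Nat.card_Ico, Nat.cast_sub hab]; push_cast; ring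
      have hCj : C N R j ≤ R j := C_le N R hN (by omega)
      have hd : (1:ℝ) ≤ (p+1:ℝ) - j := by
        have : (j:ℝ) ≤ p := by exact_mod_cast Nat.lt_succ_iff.mp hjlt
        linarith
      have hεle : ε ≤ α - sl N R p := le_trans (min_le_right _ _) (min_le_right _ _)
      have hsum' : C N R (p+1) - C N R j ≤ ((p+1:ℝ) - j) * sl N R p := by
        rw [htel]
        calc ∑ i ∈ Finset.Ico j (p+1), sl N R i
            ≤ (Finset.Ico j (p+1)).card • sl N R p := hsum
          _ = ((Finset.Ico j (p+1)).card : ℝ) * sl N R p := by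
              rw [nsmul_eq_mul]
          _ = ((p+1:ℝ) - j) * sl N R p := by rw [hcard]
      nlinarith [hsum', hCj, hεle, hd, hα1]
    · subst hjeq
      push_cast
      have hεle : ε ≤ R (p+1) - C N R (p+1) := min_le_left _ _
      nlinarith [hεle]
    · -- j ≥ p+2 : use right-slope bound
      have hab : p + 1 ≤ j := by omega
      have htel : C N R j - C N R (p+1) = ∑ i ∈ Finset.Ico (p+1) j, sl N R i :=
        telescope N R hab
      have hsum : (Finset.Ico (p+1) j).card • sl N R (p+1)
          ≤ ∑ i ∈ Finset.Ico (p+1) j, sl N R i := by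
        apply Finset.card_nsmul_le_sum
        intro i hi
        simp only [Finset.mem_Ico] at hi
        exact sl_mono N R hN (by omega) (by omega)
      have hcard : ((Finset.Ico (p+1) j).card : ℝ) = (j:ℝ) - (p+1:ℝ) := by
        rw [Nat.card_Ico, Nat.cast_sub hab]; push_cast; ring
      have hCj : C N R j ≤ R j := C_le N R hN hj
      have hd : (1:ℝ) ≤ (j:ℝ) - (p+1:ℝ) := by
        have : (p+2:ℝ) ≤ j := by exact_mod_cast hjgt
        push_cast at this ⊢; linarith
      have hεle : ε ≤ sl N R (p+1) - α :=
        le_trans (min_le_right _ _) (min_le_left _ _)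
      have hsum' : ((j:ℝ) - (p+1:ℝ)) * sl N R (p+1) ≤ C N R j - C N R (p+1) := by
        rw [htel, ← hcard, ← nsmul_eq_mul]
        exact hsum
      nlinarith [hsum', hCj, hεle, hd, hα2]
  have := le_C N R (show p + 1 ≤ N by omega) hadm
  simp only at this
  push_cast at this
  nlinarith [this, hε]


lemma exists_a {k : ℕ} (hk : k < N) :
    ∃ a ≤ k, ∀ m', k < m' → m' ≤ N →
      sl N R k * ((m':ℝ) - a) ≤ R m' - R a := by
  classical
  have hN : 0 < N := by omega
  set P : ℕ → Prop := fun a => C N R a = R a with hP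
  set a := Nat.findGreatest P k with hadef
  have ha_le : a ≤ k := Nat.findGreatest_le k
  have haC : C N R a = R a :=
    Nat.findGreatest_spec (P := P) (Nat.zero_le k) (show P 0 from C_zero N R hN)
  -- slopes are constant on (a, k]
  have hstep : ∀ i, a ≤ i → i < k → sl N R i = sl N R (i+1) := by
    intro i hai hik
    have hne : ¬ P (i+1) :=
      Nat.findGreatest_is_greatest (P := P) (n := k) (show a < i + 1 by omega) (by omega)
    have hlt : C N R (i+1) < R (i+1) :=
      lt_of_le_of_ne (C_le N R hN (by omega)) hne
    have h1 := kink N R (show i + 2 ≤ N by omega) hlt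
    have h2 := sl_mono N R hN (Nat.le_succ i) (show i + 1 < N by omega)
    linarith
  have hconst : ∀ i, a ≤ i → i ≤ k → sl N R i = sl N R a := by
    intro i hai hik
    induction i, hai using Nat.le_induction with
    | base => rfl
    | succ m hm ih =>
      have h1 : m ≤ k := by omega
      have h2 : m < k := by omega
      rw [← hstep m hm h2, ih h1]
  refine ⟨a, ha_le, fun m' hm1 hm2 => ?_⟩
  have htel : C N R m' - C N R a = ∑ i ∈ Finset.Ico a m', sl N R i :=
    telescope N R (by omega)
  have hsum : (Finset.Ico a m').card • sl N R k ≤ ∑ i ∈ Finset.Ico a m', sl N R i := by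
    apply Finset.card_nsmul_le_sum
    intro i hi
    simp only [Finset.mem_Ico] at hi
    rcases Nat.lt_or_ge i (k+1) with hik | hik
    · rw [hconst i hi.1 (by omega), ← hconst k ha_le le_rfl]
    · exact sl_mono N R hN (by omega) (by omega)
  have hcard : ((Finset.Ico a m').card : ℝ) = (m':ℝ) - a := by
    rw [Nat.card_Ico, Nat.cast_sub (by omega)]
  have hCm : C N R m' ≤ R m' := C_le N R hN hm2
  calc sl N R k * ((m':ℝ) - a) = ((Finset.Ico a m').card : ℝ) * sl N R k := by
        rw [hcard]; ring
    _ = (Finset.Ico a m').card • sl N R k := by rw [nsmul_eq_mul]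
    _ ≤ ∑ i ∈ Finset.Ico a m', sl N R i := hsum
    _ = C N R m' - C N R a := htel.symm
    _ ≤ R m' - R a := by rw [← haC] at *; linarith

lemma exists_m {k a : ℕ} (hk : k < N) (ha : a ≤ k) :
    ∃ m', k < m' ∧ m' ≤ N ∧ R m' - R a ≤ sl N R k * ((m':ℝ) - a) := by
  classical
  have hN : 0 < N := by omega
  set P : ℕ → Prop := fun m' => k < m' ∧ C N R m' = R m' with hP
  have hex : ∃ m', P m' := ⟨N, hk, C_last N R hN⟩
  set m' := Nat.find hex with hm'def
  obtain ⟨hkm, hCm⟩ : P m' := Nat.find_spec hex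
  have hm'N : m' ≤ N := Nat.find_min' hex ⟨hk, C_last N R hN⟩
  have hstep : ∀ i, k ≤ i → i + 1 < m' → sl N R (i+1) = sl N R i := by
    intro i hki him
    have hne : ¬ P (i+1) := Nat.find_min hex (by omega)
    have hne' : ¬ C N R (i+1) = R (i+1) := fun hc => hne ⟨by omega, hc⟩
    have hlt : C N R (i+1) < R (i+1) :=
      lt_of_le_of_ne (C_le N R hN (by omega)) hne'
    have h1 := kink N R (show i + 2 ≤ N by omega) hlt
    have h2 := sl_mono N R hN (Nat.le_succ i) (show i + 1 < N by omega)
    linarith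
  have hconst : ∀ i, k ≤ i → i < m' → sl N R i = sl N R k := by
    intro i hki him
    induction i, hki using Nat.le_induction with
    | base => rfl
    | succ m hm ih =>
      rw [hstep m hm (by omega), ih (by omega)]
  refine ⟨m', hkm, hm'N, ?_⟩
  have htel : C N R m' - C N R a = ∑ i ∈ Finset.Ico a m', sl N R i :=
    telescope N R (by omega)
  have hsum : ∑ i ∈ Finset.Ico a m', sl N R i ≤ (Finset.Ico a m').card • sl N R k := by
    apply Finset.sum_le_card_nsmul
    intro i hi
    simp only [Finset.mem_Ico] at hi
    rcases Nat.lt_or_ge i k with hik | hik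
    · exact sl_mono N R hN (by omega) hk
    · rw [hconst i hik hi.2]
  have hcard : ((Finset.Ico a m').card : ℝ) = (m':ℝ) - a := by
    rw [Nat.card_Ico, Nat.cast_sub (by omega)]
  have hCa : C N R a ≤ R a := C_le N R hN (by omega)
  calc R m' - R a ≤ C N R m' - C N R a := by rw [hCm] at *; linarith
    _ = ∑ i ∈ Finset.Ico a m', sl N R i := htel
    _ ≤ (Finset.Ico a m').card • sl N R k := hsum
    _ = ((Finset.Ico a m').card : ℝ) * sl N R k := by rw [nsmul_eq_mul]
    _ = sl N R k * ((m':ℝ) - a) := by rw [hcard]; ring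

lemma abel_id (G w : ℕ → ℝ) (M : ℕ) :
    ∑ j ∈ Finset.range (M+1), (G (j+1) - G j) * w j
      = G (M+1) * w M - G 0 * w 0
        - ∑ j ∈ Finset.range M, G (j+1) * (w (j+1) - w j) := by
  induction M with
  | zero => simp; ring
  | succ M ih =>
    rw [Finset.sum_range_succ, ih, Finset.sum_range_succ]
    ring

/-- optimality: the GCM slopes are the isotonic regression of the increments of R -/
lemma opt (hN : 0 < N) (h0 : R 0 = 0) (y : ℕ → ℝ)
    (hy : ∀ j, j + 1 < N → y j ≤ y (j+1)) :
    ∑ j ∈ Finset.range N, ((R (j+1) - R j) - sl N R j) * (y j - sl N R j) ≤ 0 := by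
  classical
  set G : ℕ → ℝ := fun m => R m - C N R m with hG
  set w : ℕ → ℝ := fun j => y j - sl N R j with hw
  have hG0 : G 0 = 0 := by simp [hG, C_zero N R hN, h0]
  have hGN : G N = 0 := by simp [hG, C_last N R hN]
  have hsummand : ∀ j, ((R (j+1) - R j) - sl N R j) * (y j - sl N R j)
      = (G (j+1) - G j) * w j := by
    intro j
    simp only [hG, hw, sl]
    ring
  obtain ⟨M, rfl⟩ : ∃ M, N = M + 1 := ⟨N - 1, by omega⟩
  rw [Finset.sum_congr rfl (fun j _ => hsummand j), abel_id, hGN, hG0]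
  simp only [zero_mul, mul_zero, sub_zero, zero_sub]
  rw [neg_nonpos]
  apply Finset.sum_nonneg
  intro j hj
  simp only [Finset.mem_range] at hj
  have hGpos : 0 ≤ G (j+1) := by
    simp only [hG]
    have := C_le (M+1) R hN (show j + 1 ≤ M + 1 by omega)
    linarith
  by_cases hc : sl (M+1) R (j+1) = sl (M+1) R j
  · have hwd : w (j+1) - w j = y (j+1) - y j := by
      simp only [hw, hc]; ring
    rw [hwd]
    exact mul_nonneg hGpos (by linarith [hy j (by omega)])
  · have hlt : sl (M+1) R j < sl (M+1) R (j+1) :=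
      lt_of_le_of_ne (sl_mono (M+1) R hN (Nat.le_succ j) (by omega)) (Ne.symm hc)
    have hCR : C (M+1) R (j+1) = R (j+1) := by
      by_contra hne
      have hCl : C (M+1) R (j+1) < R (j+1) :=
        lt_of_le_of_ne (C_le (M+1) R hN (by omega)) hne
      have := kink (M+1) R (show j + 2 ≤ M + 1 by omega) hCl
      linarith
    have : G (j+1) = 0 := by simp [hG, hCR]
    rw [this, zero_mul]

end IC2



/-- Interval censoring, case 2: the simple least squares estimator evaluated at the
ordered observation points is the isotonic regression (max-min formula, i.e. the
left-continuous slope of the greatest convex minorant of the cusum diagram) of the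
responses `r`, and these values automatically lie in `[0,1]`. -/
theorem stmt4 (n : ℕ) (hn : 0 < n) (u v δ0 δ1 : Fin n → ℝ)
    (hu : ∀ i, 0 ≤ u i) (huv : ∀ i, u i < v i)
    (hδ0 : ∀ i, δ0 i = 0 ∨ δ0 i = 1) (hδ1 : ∀ i, δ1 i = 0 ∨ δ1 i = 1)
    (hδ01 : ∀ i, δ0 i * δ1 i = 0)
    (huinj : Function.Injective u) (hvinj : Function.Injective v)
    (huvne : ∀ i j, u i ≠ v j)
    (t : Fin (2 * n) → ℝ) (ht : StrictMono t)
    (htrange : Set.range t = Set.range u ∪ Set.range v)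
    (r : Fin (2 * n) → ℝ)
    (hru : ∀ (k : Fin (2 * n)) (i : Fin n), t k = u i → r k = δ0 i)
    (hrv : ∀ (k : Fin (2 * n)) (i : Fin n), t k = v i → r k = δ0 i + δ1 i)
    (D : Set (ℝ → ℝ))
    (hD : D = {F : ℝ → ℝ | MonotoneOn F (Set.Ici 0) ∧
      ∀ s ∈ Set.Ici (0 : ℝ), F s ∈ Set.Icc (0 : ℝ) 1})
    (ψ₂ : (ℝ → ℝ) → ℝ)
    (hψ₂ : ∀ F : ℝ → ℝ, ψ₂ F = ∑ i, ((F (u i) - δ0 i) ^ 2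
      + (F (v i) - δ0 i - δ1 i) ^ 2))
    (Fhat : ℝ → ℝ) (hFhat : Fhat ∈ D)
    (hmin : ∀ F ∈ D, ψ₂ Fhat ≤ ψ₂ F) :
    ∀ k : Fin (2 * n),
      Fhat (t k) =
        (Finset.Iic k).sup' ⟨k, Finset.mem_Iic.mpr le_rfl⟩ (fun s =>
          (Finset.Ici k).inf' ⟨k, Finset.mem_Ici.mpr le_rfl⟩ (fun m =>
            (∑ j ∈ Finset.Icc s m, r j) / (((m : ℕ) - (s : ℕ) + 1 : ℕ) : ℝ))) ∧
      (Finset.Iic k).sup' ⟨k, Finset.mem_Iic.mpr le_rfl⟩ (fun s =>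
          (Finset.Ici k).inf' ⟨k, Finset.mem_Ici.mpr le_rfl⟩ (fun m =>
            (∑ j ∈ Finset.Icc s m, r j) / (((m : ℕ) - (s : ℕ) + 1 : ℕ) : ℝ)))
        ∈ Set.Icc (0 : ℝ) 1 := by
  classical
  have hN : 0 < 2 * n := by omega
  -- responses as a function on ℕ, and the cusum diagram
  set r' : ℕ → ℝ := fun j => if h : j < (2 * n) then r ⟨j, h⟩ else 0 with hr'
  set R : ℕ → ℝ := fun m => ∑ j ∈ Finset.range m, r' j with hRdef
  have hR0 : R 0 = 0 := by simp [hRdef]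
  have hRsucc : ∀ j, R (j + 1) - R j = r' j := by
    intro j; simp [hRdef, Finset.sum_range_succ]
  -- responses are in [0,1]
  have hr01 : ∀ kk : Fin (2 * n), 0 ≤ r kk ∧ r kk ≤ 1 := by
    intro kk
    have hmem : t kk ∈ Set.range u ∪ Set.range v := by
      rw [← htrange]; exact ⟨kk, rfl⟩
    rcases hmem with ⟨i, hi⟩ | ⟨i, hi⟩
    · rw [hru kk i hi.symm]
      rcases hδ0 i with h | h <;> simp [h]
    · rw [hrv kk i hi.symm]
      rcases hδ0 i with h0 | h0 <;> rcases hδ1 i with h1 | h1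
      · simp [h0, h1]
      · simp [h0, h1]
      · simp [h0, h1]
      · exfalso; have := hδ01 i; rw [h0, h1] at this; norm_num at this
  have hr'01 : ∀ j, 0 ≤ r' j ∧ r' j ≤ 1 := by
    intro j
    by_cases h : j < (2 * n)
    · simp only [hr', dif_pos h]; exact hr01 ⟨j, h⟩
    · simp [hr', dif_neg h]
  have hr'eq : ∀ kk : Fin (2 * n), r' (kk : ℕ) = r kk := by
    intro kk; simp [hr', kk.isLt]
  -- sums over Fin-intervals expressed via the cusum diagram
  have hIccsum : ∀ s m : Fin (2 * n), (s : ℕ) ≤ (m : ℕ) →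
      ∑ j ∈ Finset.Icc s m, r j = R ((m : ℕ) + 1) - R (s : ℕ) := by
    intro s m hsm
    have h1 : ∑ j ∈ Finset.Icc s m, r j = ∑ j ∈ Finset.Icc (s : ℕ) (m : ℕ), r' j := by
      rw [← Fin.map_valEmbedding_Icc, Finset.sum_map]
      exact Finset.sum_congr rfl (fun j _ => (hr'eq j).symm)
    rw [h1, ← Finset.Ico_add_one_right_eq_Icc, Finset.sum_Ico_eq_sub _ (by omega)]
  -- t ≥ 0 and monotone values
  have ht0 : ∀ kk : Fin (2 * n), (0 : ℝ) ≤ t kk := by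
    intro kk
    have hmem : t kk ∈ Set.range u ∪ Set.range v := by
      rw [← htrange]; exact ⟨kk, rfl⟩
    rcases hmem with ⟨i, hi⟩ | ⟨i, hi⟩
    · rw [← hi]; exact hu i
    · rw [← hi]; exact le_trans (hu i) (huv i).le
  obtain ⟨hFmono, hFrange⟩ : MonotoneOn Fhat (Set.Ici 0) ∧
      ∀ s ∈ Set.Ici (0 : ℝ), Fhat s ∈ Set.Icc (0 : ℝ) 1 := by
    rw [hD] at hFhat; exact hFhat
  -- ψ₂ as a sum over the ordered points
  have hsum_eq : ∀ F : ℝ → ℝ, ψ₂ F = ∑ kk : Fin (2 * n), (F (t kk) - r kk) ^ 2 := by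
    intro F
    rw [hψ₂]
    set e : Fin n ⊕ Fin n → ℝ := Sum.elim u v with he
    have hrange : ∀ x, ∃ kk : Fin (2 * n), t kk = e x := by
      intro x
      have : e x ∈ Set.range t := by
        rw [htrange]
        rcases x with i | i
        · exact Or.inl ⟨i, rfl⟩
        · exact Or.inr ⟨i, rfl⟩
      exact this
    choose φ hφ using hrange
    have hinj : Function.Injective φ := by
      intro x y hxy
      have hexy : e x = e y := by rw [← hφ x, ← hφ y, hxy]
      rcases x with i | i <;> rcases y with j | j <;> simp only [he, Sum.elim_inl, Sum.elim_inr] at hexy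
      · exact congrArg Sum.inl (huinj hexy)
      · exact absurd hexy (huvne i j)
      · exact absurd hexy.symm (huvne j i)
      · exact congrArg Sum.inr (hvinj hexy)
    have hcard : Fintype.card (Fin n ⊕ Fin n) = Fintype.card (Fin (2 * n)) := by
      simp only [Fintype.card_sum, Fintype.card_fin]; omega
    have hbij : Function.Bijective φ :=
      (Fintype.bijective_iff_injective_and_card φ).mpr ⟨hinj, hcard⟩
    have hkey := Fintype.sum_bijective φ hbij
      (fun x => (F (e x) - Sum.elim δ0 (fun i => δ0 i + δ1 i) x) ^ 2)
      (fun kk => (F (t kk) - r kk) ^ 2) ?_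
    · rw [← hkey, Fintype.sum_sum_type]
      rw [← Finset.sum_add_distrib]
      apply Finset.sum_congr rfl
      intro i _
      simp only [he, Sum.elim_inl, Sum.elim_inr]
      ring
    · intro x
      rcases x with i | i
      · have h1 : t (φ (Sum.inl i)) = u i := by rw [hφ]; rfl
        have h2 : r (φ (Sum.inl i)) = δ0 i := hru _ i h1
        simp only [he, Sum.elim_inl, h2, ← h1]
      · have h1 : t (φ (Sum.inr i)) = v i := by rw [hφ]; rfl
        have h2 : r (φ (Sum.inr i)) = δ0 i + δ1 i := hrv _ i h1
        simp only [he, Sum.elim_inr, h2, ← h1]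
  -- the sup-inf expression
  set E : Fin (2 * n) → ℝ := fun kk => (Finset.Iic kk).sup' ⟨kk, Finset.mem_Iic.mpr le_rfl⟩ (fun s =>
      (Finset.Ici kk).inf' ⟨kk, Finset.mem_Ici.mpr le_rfl⟩ (fun m =>
        (∑ j ∈ Finset.Icc s m, r j) / (((m : ℕ) - (s : ℕ) + 1 : ℕ) : ℝ))) with hE
  -- each average is in [0,1]
  have havg : ∀ s m : Fin (2 * n), (s : ℕ) ≤ (m : ℕ) →
      0 ≤ (∑ j ∈ Finset.Icc s m, r j) / (((m : ℕ) - (s : ℕ) + 1 : ℕ) : ℝ) ∧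
      (∑ j ∈ Finset.Icc s m, r j) / (((m : ℕ) - (s : ℕ) + 1 : ℕ) : ℝ) ≤ 1 := by
    intro s m hsm
    have hcardpos : (0 : ℝ) < (((m : ℕ) - (s : ℕ) + 1 : ℕ) : ℝ) := by
      positivity
    have hsum0 : 0 ≤ ∑ j ∈ Finset.Icc s m, r j :=
      Finset.sum_nonneg (fun j _ => (hr01 j).1)
    have hsumle : ∑ j ∈ Finset.Icc s m, r j ≤ (((m : ℕ) - (s : ℕ) + 1 : ℕ) : ℝ) := by
      have hcard : (Finset.Icc s m).card = (m : ℕ) - (s : ℕ) + 1 := by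
        rw [Fin.card_Icc]
        omega
      calc ∑ j ∈ Finset.Icc s m, r j ≤ (Finset.Icc s m).card • (1 : ℝ) :=
            Finset.sum_le_card_nsmul _ _ _ (fun j _ => (hr01 j).2)
        _ = (((m : ℕ) - (s : ℕ) + 1 : ℕ) : ℝ) := by rw [hcard, nsmul_eq_mul, mul_one]
    exact ⟨div_nonneg hsum0 hcardpos.le, (div_le_one hcardpos).mpr hsumle⟩
  have hE01 : ∀ kk : Fin (2 * n), 0 ≤ E kk ∧ E kk ≤ 1 := by
    intro kk
    constructor
    · apply Finset.le_sup'_of_le _ (Finset.mem_Iic.mpr (le_refl kk))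
      apply Finset.le_inf'
      intro m hm
      exact (havg kk m (Fin.le_def.mp (Finset.mem_Ici.mp hm))).1
    · apply Finset.sup'_le
      intro s hs
      apply Finset.inf'_le_of_le _ (Finset.mem_Ici.mpr (le_refl kk))
      exact (havg s kk (Fin.le_def.mp (Finset.mem_Iic.mp hs))).2
  -- E equals the GCM slope
  have hEsl : ∀ kk : Fin (2 * n), E kk = IC2.sl (2 * n) R (kk : ℕ) := by
    intro kk
    have hkN : (kk : ℕ) < (2 * n) := kk.isLt
    apply le_antisymm
    · -- sup' ≤ sl : for each s find a good m
      apply Finset.sup'_le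
      intro s hs
      have hsk : (s : ℕ) ≤ (kk : ℕ) := Fin.le_def.mp (Finset.mem_Iic.mp hs)
      obtain ⟨m', hm1, hm2, hble⟩ := IC2.exists_m (2 * n) R hkN hsk
      set m : Fin (2 * n) := ⟨m' - 1, by omega⟩ with hm
      have hmval : (m : ℕ) = m' - 1 := rfl
      have hmem : m ∈ Finset.Ici kk := Finset.mem_Ici.mpr (by
        rw [Fin.le_def]; simp only [hmval]; omega)
      apply Finset.inf'_le_of_le _ hmem
      have hsm : (s : ℕ) ≤ (m : ℕ) := by simp only [hmval]; omega
      rw [hIccsum s m hsm]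
      have hm1' : (m : ℕ) + 1 = m' := by simp only [hmval]; omega
      rw [hm1']
      have hd : ((m : ℕ) - (s : ℕ) + 1 : ℕ) = m' - (s : ℕ) := by
        simp only [hmval]; omega
      rw [hd]
      have hdpos : (0 : ℝ) < ((m' - (s : ℕ) : ℕ) : ℝ) := by
        have : 0 < m' - (s : ℕ) := by omega
        exact_mod_cast this
      rw [div_le_iff₀ hdpos]
      have hcast : ((m' - (s : ℕ) : ℕ) : ℝ) = (m' : ℝ) - ((s : ℕ) : ℝ) := by
        rw [Nat.cast_sub (by omega)]
      rw [hcast]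
      exact hble
    · -- sl ≤ sup' : pick the witness a
      obtain ⟨a, ha, hbnd⟩ := IC2.exists_a (2 * n) R hkN
      set s : Fin (2 * n) := ⟨a, by omega⟩ with hsdef
      have hmem : s ∈ Finset.Iic kk := Finset.mem_Iic.mpr (by
        rw [Fin.le_def]; exact ha)
      apply Finset.le_sup'_of_le _ hmem
      apply Finset.le_inf'
      intro m hm
      have hkm : (kk : ℕ) ≤ (m : ℕ) := Fin.le_def.mp (Finset.mem_Ici.mp hm)
      have hsm : (s : ℕ) ≤ (m : ℕ) := by simp only [hsdef]; omega
      rw [hIccsum s m hsm]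
      have hbnd' := hbnd ((m : ℕ) + 1) (by omega) (by omega)
      have hdpos : (0 : ℝ) < (((m : ℕ) - (s : ℕ) + 1 : ℕ) : ℝ) := by positivity
      rw [le_div_iff₀ hdpos]
      have hcast : (((m : ℕ) - (s : ℕ) + 1 : ℕ) : ℝ) = ((m : ℕ) : ℝ) + 1 - ((s : ℕ) : ℝ) := by
        rw [Nat.cast_add, Nat.cast_sub hsm]; push_cast; ring
      rw [hcast]
      have : ((s : ℕ) : ℝ) = (a : ℝ) := by simp [hsdef]
      rw [this]
      have hexp : ((((m : ℕ) + 1 : ℕ)) : ℝ) = ((m : ℕ) : ℝ) + 1 := by push_cast; ring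
      rw [hexp] at hbnd'
      linarith [hbnd']
  -- the GCM slopes are monotone and in [0,1]
  have hslmono : ∀ kk kk' : Fin (2 * n), kk ≤ kk' → IC2.sl (2 * n) R (kk : ℕ) ≤ IC2.sl (2 * n) R (kk' : ℕ) :=
    fun kk kk' h => IC2.sl_mono (2 * n) R hN (Fin.le_def.mp h) kk'.isLt
  have hsl01 : ∀ kk : Fin (2 * n), 0 ≤ IC2.sl (2 * n) R (kk : ℕ) ∧ IC2.sl (2 * n) R (kk : ℕ) ≤ 1 := by
    intro kk; rw [← hEsl kk]; exact hE01 kk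
  -- the candidate step function
  set k0 : Fin (2 * n) := ⟨0, hN⟩ with hk0
  have hune : (Finset.univ : Finset (Fin (2 * n))).Nonempty := ⟨k0, Finset.mem_univ _⟩
  set Fst : ℝ → ℝ := fun x => Finset.univ.sup' hune
      (fun kk : Fin (2 * n) => if t kk ≤ x then IC2.sl (2 * n) R (kk : ℕ) else IC2.sl (2 * n) R (k0 : ℕ)) with hFst
  have hFstmono : Monotone Fst := by
    intro x x' hxx'
    apply Finset.sup'_le
    intro kk _
    apply Finset.le_sup'_of_le _ (Finset.mem_univ kk)
    by_cases h : t kk ≤ x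
    · rw [if_pos h, if_pos (le_trans h hxx')]
    · rw [if_neg h]
      by_cases h' : t kk ≤ x'
      · rw [if_pos h']
        exact hslmono k0 kk (Fin.le_def.mpr (by simp [hk0]))
      · rw [if_neg h']
  have hFstD : Fst ∈ D := by
    rw [hD]
    refine ⟨hFstmono.monotoneOn _, fun s _ => ⟨?_, ?_⟩⟩
    · apply Finset.le_sup'_of_le _ (Finset.mem_univ k0)
      by_cases h : t k0 ≤ s <;> simp [h, (hsl01 k0).1]
    · apply Finset.sup'_le
      intro kk _
      by_cases h : t kk ≤ s <;> simp [h, (hsl01 kk).2, (hsl01 k0).2]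
  have hFstval : ∀ kk : Fin (2 * n), Fst (t kk) = IC2.sl (2 * n) R (kk : ℕ) := by
    intro kk
    apply le_antisymm
    · apply Finset.sup'_le
      intro j _
      by_cases h : t j ≤ t kk
      · rw [if_pos h]
        exact hslmono j kk ((ht.le_iff_le).mp h)
      · rw [if_neg h]
        exact hslmono k0 kk (Fin.le_def.mpr (by simp [hk0]))
    · apply Finset.le_sup'_of_le _ (Finset.mem_univ kk)
      rw [if_pos le_rfl]
  -- the observed values
  set y : ℕ → ℝ := fun j => if h : j < (2 * n) then Fhat (t ⟨j, h⟩) else 0 with hy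
  have hymono : ∀ j, j + 1 < (2 * n) → y j ≤ y (j + 1) := by
    intro j hj
    have h1 : j < (2 * n) := by omega
    simp only [hy, dif_pos h1, dif_pos hj]
    exact hFmono (ht0 _) (ht0 _) (ht.monotone (by rw [Fin.le_def]; simp))
  have hopt := IC2.opt (2 * n) R hN hR0 y hymono
  -- convert Fin sums to range sums
  have hfin1 : ∑ kk : Fin (2 * n), (Fhat (t kk) - r kk) ^ 2 = ∑ j ∈ Finset.range (2 * n), (y j - r' j) ^ 2 := by
    rw [← Fin.sum_univ_eq_sum_range]
    apply Finset.sum_congr rfl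
    intro kk _
    simp only [hy, hr', dif_pos kk.isLt, Fin.eta]
  have hfin2 : ∑ kk : Fin (2 * n), (Fst (t kk) - r kk) ^ 2
      = ∑ j ∈ Finset.range (2 * n), (IC2.sl (2 * n) R j - r' j) ^ 2 := by
    rw [← Fin.sum_univ_eq_sum_range]
    apply Finset.sum_congr rfl
    intro kk _
    rw [hFstval kk]
    simp only [hr', dif_pos kk.isLt, Fin.eta]
  -- the key quadratic inequality
  have hopt' : ∑ j ∈ Finset.range (2 * n), (r' j - IC2.sl (2 * n) R j) * (y j - IC2.sl (2 * n) R j) ≤ 0 := by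
    have : ∀ j, (r' j - IC2.sl (2 * n) R j) * (y j - IC2.sl (2 * n) R j)
        = ((R (j + 1) - R j) - IC2.sl (2 * n) R j) * (y j - IC2.sl (2 * n) R j) := by
      intro j; rw [hRsucc]
    rw [Finset.sum_congr rfl (fun j _ => this j)]
    exact hopt
  have hkey : ∑ j ∈ Finset.range (2 * n), (IC2.sl (2 * n) R j - r' j) ^ 2
        + ∑ j ∈ Finset.range (2 * n), (y j - IC2.sl (2 * n) R j) ^ 2
      ≤ ∑ j ∈ Finset.range (2 * n), (y j - r' j) ^ 2 := by
    have hid : ∀ j, (y j - r' j) ^ 2 = (y j - IC2.sl (2 * n) R j) ^ 2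
        + (IC2.sl (2 * n) R j - r' j) ^ 2 - 2 * ((r' j - IC2.sl (2 * n) R j) * (y j - IC2.sl (2 * n) R j)) := by
      intro j; ring
    rw [Finset.sum_congr rfl (fun j _ => hid j)]
    rw [Finset.sum_sub_distrib, Finset.sum_add_distrib, ← Finset.mul_sum]
    linarith [hopt']
  -- conclude
  have hmin' : ψ₂ Fhat ≤ ψ₂ Fst := hmin Fst hFstD
  rw [hsum_eq Fhat, hsum_eq Fst, hfin1, hfin2] at hmin'
  have hzero : ∑ j ∈ Finset.range (2 * n), (y j - IC2.sl (2 * n) R j) ^ 2 ≤ 0 := by linarith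
  have hyval : ∀ j ∈ Finset.range (2 * n), (y j - IC2.sl (2 * n) R j) ^ 2 = 0 := by
    intro j hj
    have hnn : ∀ j ∈ Finset.range (2 * n), (0:ℝ) ≤ (y j - IC2.sl (2 * n) R j) ^ 2 :=
      fun j _ => sq_nonneg _
    have := (Finset.sum_eq_zero_iff_of_nonneg hnn).mp (le_antisymm hzero (Finset.sum_nonneg hnn))
    exact this j hj
  intro k
  have hyk : y (k : ℕ) = IC2.sl (2 * n) R (k : ℕ) := by
    have := hyval (k : ℕ) (Finset.mem_range.mpr k.isLt)
    have h2 : y (k : ℕ) - IC2.sl (2 * n) R (k : ℕ) = 0 := by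
      exact pow_eq_zero_iff (n := 2) (by norm_num) |>.mp this
    linarith
  have hFhatk : Fhat (t k) = IC2.sl (2 * n) R (k : ℕ) := by
    rw [← hyk]; simp [hy, dif_pos k.isLt]
  constructor
  · rw [hFhatk, ← hEsl k]
  · exact ⟨(hE01 k).1, (hE01 k).2⟩
end

section
/- Let M > 0, let F, F_0 : [0,M] → ℝ be continuous, and let h be continuous on the closed triangle S̄ = {(u,v) : 0 ≤ u ≤ v ≤ M} and strictly positive on S = {(u,v) : 0 ≤ u < v ≤ M}. If ∬_S (F(u) − F_0(u))² h(u,v) du dv + ∬_S ( (F(v) − F(u)) − (F_0(v) − F_0(u)) )² h(u,v) du dv + ∬_S (F(v) − F_0(v))² h(u,v) du dv ≤ 0, then F(t) = F_0(t) for every t ∈ [0,M]. -/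
open MeasureTheory

lemma triangle_meas (M : ℝ) : MeasurableSet {p : ℝ × ℝ | 0 ≤ p.1 ∧ p.1 < p.2 ∧ p.2 ≤ M} := by
  apply MeasurableSet.inter
  · exact measurableSet_le measurable_const measurable_fst
  apply MeasurableSet.inter
  · exact measurableSet_lt measurable_fst measurable_snd
  · exact measurableSet_le measurable_snd measurable_const

lemma triangle_key (M : ℝ) (f : ℝ × ℝ → ℝ)
    (hfc : ContinuousOn f {p : ℝ × ℝ | 0 ≤ p.1 ∧ p.1 ≤ p.2 ∧ p.2 ≤ M})
    (hfnn : ∀ p ∈ {p : ℝ × ℝ | 0 ≤ p.1 ∧ p.1 < p.2 ∧ p.2 ≤ M}, 0 ≤ f p)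
    (hzero : ∫ p in {p : ℝ × ℝ | 0 ≤ p.1 ∧ p.1 < p.2 ∧ p.2 ≤ M}, f p = 0) :
    ∀ p ∈ {p : ℝ × ℝ | 0 ≤ p.1 ∧ p.1 < p.2 ∧ p.2 ≤ M}, f p = 0 := by
  set S : Set (ℝ × ℝ) := {p : ℝ × ℝ | 0 ≤ p.1 ∧ p.1 < p.2 ∧ p.2 ≤ M} with hSdef
  set Sbar : Set (ℝ × ℝ) := {p : ℝ × ℝ | 0 ≤ p.1 ∧ p.1 ≤ p.2 ∧ p.2 ≤ M} with hSbardef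
  have hSsub : S ⊆ Sbar := fun p hp => ⟨hp.1, hp.2.1.le, hp.2.2⟩
  have hSbarSub : Sbar ⊆ Set.Icc (0 : ℝ) M ×ˢ Set.Icc (0 : ℝ) M := by
    rintro ⟨u, v⟩ ⟨h1, h2, h3⟩
    exact ⟨⟨h1, h2.trans h3⟩, ⟨h1.trans h2, h3⟩⟩
  have hSbarClosed : IsClosed Sbar := by
    have : Sbar = {p : ℝ × ℝ | 0 ≤ p.1} ∩ ({p : ℝ × ℝ | p.1 ≤ p.2} ∩ {p : ℝ × ℝ | p.2 ≤ M}) := by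
      ext p; simp [hSbardef, Set.mem_setOf_eq, and_assoc]
    rw [this]
    exact (isClosed_le continuous_const continuous_fst).inter
      ((isClosed_le continuous_fst continuous_snd).inter
        (isClosed_le continuous_snd continuous_const))
  have hSbarCompact : IsCompact Sbar := by
    have : IsCompact (Set.Icc (0 : ℝ) M ×ˢ Set.Icc (0 : ℝ) M) := isCompact_Icc.prod isCompact_Icc
    exact this.of_isClosed_subset hSbarClosed hSbarSub
  have hSmeas : MeasurableSet S := triangle_meas M
  have hint : IntegrableOn f S := (hfc.integrableOn_compact hSbarCompact).mono_set hSsub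
  intro p hp
  by_contra hne
  have hfp : 0 < f p := lt_of_le_of_ne (hfnn p hp) (Ne.symm hne)
  obtain ⟨u0, v0⟩ := p
  obtain ⟨hu0, huv, hv0⟩ := hp
  -- continuity at p within Sbar: find r > 0 s.t. f > f p / 2 on ball ∩ Sbar
  have hcw : ContinuousWithinAt f Sbar (u0, v0) := hfc _ (hSsub ⟨hu0, huv, hv0⟩)
  have hmem : {q | f (u0, v0) / 2 < f q} ∈ nhdsWithin (u0, v0) Sbar := by
    exact hcw (Ioi_mem_nhds (by linarith))
  rw [mem_nhdsWithin] at hmem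
  obtain ⟨U, hUopen, hpU, hUsub⟩ := hmem
  obtain ⟨r, hr, hball⟩ := Metric.isOpen_iff.1 hUopen _ hpU
  set δ : ℝ := min (r / 2) ((v0 - u0) / 4) with hδdef
  have hδpos : 0 < δ := lt_min (by linarith) (by linarith)
  have hδr : δ < r := lt_of_le_of_lt (min_le_left _ _) (by linarith)
  have hδv : δ ≤ (v0 - u0) / 4 := min_le_right _ _
  set R : Set (ℝ × ℝ) := Set.Icc u0 (u0 + δ) ×ˢ Set.Icc (v0 - δ) v0 with hRdef
  have hRS : R ⊆ S := by
    rintro ⟨u, v⟩ ⟨⟨h1, h2⟩, ⟨h3, h4⟩⟩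
    exact ⟨le_trans hu0 h1, by simp only []; nlinarith, le_trans h4 hv0⟩
  have hRball : R ⊆ Metric.ball (u0, v0) r := by
    rintro ⟨u, v⟩ ⟨⟨h1, h2⟩, ⟨h3, h4⟩⟩
    rw [Metric.mem_ball, Prod.dist_eq]
    apply max_lt <;> rw [Real.dist_eq, abs_lt] <;> constructor <;> simp only [] <;> linarith
  have hRlb : ∀ q ∈ R, f (u0, v0) / 2 ≤ f q := fun q hq =>
    (hUsub ⟨hball (hRball hq), hSsub (hRS hq)⟩).le
  have hRmeas : MeasurableSet R := (measurableSet_Icc.prod measurableSet_Icc)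
  have hRvol : volume R = ENNReal.ofReal δ * ENNReal.ofReal δ := by
    rw [hRdef, Measure.volume_eq_prod, Measure.prod_prod, Real.volume_Icc, Real.volume_Icc]
    congr 1 <;> ring_nf
  have hRvolne : volume R ≠ ⊤ := by rw [hRvol]; exact ENNReal.mul_ne_top ENNReal.ofReal_ne_top ENNReal.ofReal_ne_top
  have hRvolpos : 0 < (volume R).toReal := by
    rw [hRvol, ENNReal.toReal_mul, ENNReal.toReal_ofReal hδpos.le]
    positivity
  have h1 : f (u0, v0) / 2 * (volume R).toReal ≤ ∫ q in R, f q :=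
    setIntegral_ge_of_const_le_real hRmeas hRvolne hRlb (hint.mono_set hRS)
  have h2 : (∫ q in R, f q) ≤ ∫ q in S, f q := by
    apply setIntegral_mono_set hint
    · filter_upwards [ae_restrict_mem hSmeas] with q hq using hfnn q hq
    · exact HasSubset.Subset.eventuallyLE hRS
  have : 0 < f (u0, v0) / 2 * (volume R).toReal := by positivity
  linarith [hzero ▸ h2, h1]
/-- Identifiability step in the consistency proof: if the sum of the three weighted
squared-difference integrals over the triangle `S` is `≤ 0`, then `F = F₀` on `[0,M]`. -/
theorem stmt7 (M : ℝ) (hM : 0 < M) (F F0 : ℝ → ℝ)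
    (hF : ContinuousOn F (Set.Icc 0 M)) (hF0 : ContinuousOn F0 (Set.Icc 0 M))
    (h : ℝ × ℝ → ℝ)
    (S : Set (ℝ × ℝ)) (hS : S = {p : ℝ × ℝ | 0 ≤ p.1 ∧ p.1 < p.2 ∧ p.2 ≤ M})
    (Sbar : Set (ℝ × ℝ)) (hSbar : Sbar = {p : ℝ × ℝ | 0 ≤ p.1 ∧ p.1 ≤ p.2 ∧ p.2 ≤ M})
    (hhcont : ContinuousOn h Sbar) (hhpos : ∀ p ∈ S, 0 < h p)
    (hineq : (∫ p in S, (F p.1 - F0 p.1) ^ 2 * h p)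
        + (∫ p in S, ((F p.2 - F p.1) - (F0 p.2 - F0 p.1)) ^ 2 * h p)
        + (∫ p in S, (F p.2 - F0 p.2) ^ 2 * h p) ≤ 0) :
    ∀ t ∈ Set.Icc (0 : ℝ) M, F t = F0 t := by
  subst hS hSbar
  set S : Set (ℝ × ℝ) := {p : ℝ × ℝ | 0 ≤ p.1 ∧ p.1 < p.2 ∧ p.2 ≤ M} with hSdef
  set Sbar : Set (ℝ × ℝ) := {p : ℝ × ℝ | 0 ≤ p.1 ∧ p.1 ≤ p.2 ∧ p.2 ≤ M} with hSbardef
  have hSmeas : MeasurableSet S := triangle_meas M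
  have hmap1 : Set.MapsTo Prod.fst Sbar (Set.Icc (0:ℝ) M) := by
    rintro ⟨u, v⟩ ⟨h1, h2, h3⟩; exact ⟨h1, h2.trans h3⟩
  have hmap2 : Set.MapsTo Prod.snd Sbar (Set.Icc (0:ℝ) M) := by
    rintro ⟨u, v⟩ ⟨h1, h2, h3⟩; exact ⟨h1.trans h2, h3⟩
  have hc1 : ContinuousOn (fun p : ℝ × ℝ => (F p.1 - F0 p.1) ^ 2 * h p) Sbar :=
    (((hF.comp continuousOn_fst hmap1).sub (hF0.comp continuousOn_fst hmap1)).pow 2).mul hhcont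
  have hc3 : ContinuousOn (fun p : ℝ × ℝ => (F p.2 - F0 p.2) ^ 2 * h p) Sbar :=
    (((hF.comp continuousOn_snd hmap2).sub (hF0.comp continuousOn_snd hmap2)).pow 2).mul hhcont
  have hnn1 : ∀ p ∈ S, 0 ≤ (F p.1 - F0 p.1) ^ 2 * h p :=
    fun p hp => mul_nonneg (sq_nonneg _) (hhpos p hp).le
  have hnn2 : ∀ p ∈ S, 0 ≤ ((F p.2 - F p.1) - (F0 p.2 - F0 p.1)) ^ 2 * h p :=
    fun p hp => mul_nonneg (sq_nonneg _) (hhpos p hp).le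
  have hnn3 : ∀ p ∈ S, 0 ≤ (F p.2 - F0 p.2) ^ 2 * h p :=
    fun p hp => mul_nonneg (sq_nonneg _) (hhpos p hp).le
  have hI1 : 0 ≤ ∫ p in S, (F p.1 - F0 p.1) ^ 2 * h p := setIntegral_nonneg hSmeas hnn1
  have hI2 : 0 ≤ ∫ p in S, ((F p.2 - F p.1) - (F0 p.2 - F0 p.1)) ^ 2 * h p :=
    setIntegral_nonneg hSmeas hnn2
  have hI3 : 0 ≤ ∫ p in S, (F p.2 - F0 p.2) ^ 2 * h p := setIntegral_nonneg hSmeas hnn3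
  have hz1 : ∫ p in S, (F p.1 - F0 p.1) ^ 2 * h p = 0 := le_antisymm (by linarith) hI1
  have hz3 : ∫ p in S, (F p.2 - F0 p.2) ^ 2 * h p = 0 := le_antisymm (by linarith) hI3
  have key1 := triangle_key M _ hc1 hnn1 hz1
  have key3 := triangle_key M _ hc3 hnn3 hz3
  intro t ht
  rcases lt_or_eq_of_le ht.2 with htM | htM
  · have hp : ((t, M) : ℝ × ℝ) ∈ S := ⟨ht.1, htM, le_refl M⟩
    have h0 : (F t - F0 t) ^ 2 * h (t, M) = 0 := key1 _ hp
    have hpos := hhpos _ hp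
    have hsq : F t - F0 t = 0 := by
      rcases mul_eq_zero.1 h0 with h' | h'
      · exact pow_eq_zero_iff (two_ne_zero) |>.1 h'
      · exact absurd h' hpos.ne'
    linarith
  · subst htM
    have hp : ((0, t) : ℝ × ℝ) ∈ S := ⟨le_refl 0, hM, le_refl t⟩
    have h0 : (F t - F0 t) ^ 2 * h (0, t) = 0 := key3 _ hp
    have hpos := hhpos _ hp
    have hsq : F t - F0 t = 0 := by
      rcases mul_eq_zero.1 h0 with h' | h'
      · exact pow_eq_zero_iff (two_ne_zero) |>.1 h'
      · exact absurd h' hpos.ne'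
    linarith
end

section
/- Let M > 0, let F_0 be continuously differentiable on [0,M] with derivative f_0, let h be continuous on the closed triangle S̄ = {(u,v) : 0 ≤ u ≤ v ≤ M}, and let t_0 ∈ (0,M). Then lim_{ε ↓ 0} ε^{-2} · [ 2 ∬_S (F_0(u) − F_0(t_0)) · 1{t_0 ≤ u ≤ t_0+ε} h(u,v) du dv + 2 ∬_S (F_0(v) − F_0(t_0)) · 1{t_0 ≤ v ≤ t_0+ε} h(u,v) du dv ] = f_0(t_0) (h_1(t_0) + h_2(t_0)), where S = {(u,v) : 0 ≤ u < v ≤ M}, h_1(t) = ∫_t^M h(t,v) dv and h_2(t) = ∫_0^t h(u,t) du. -/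
open MeasureTheory Filter

open intervalIntegral in

lemma aux_limit (ψ : ℝ → ℝ) (t0 L ε0 : ℝ) (hε0 : 0 < ε0) (hψ0 : ψ t0 = 0)
    (hd : HasDerivAt ψ L t0)
    (hint : ∀ ε ∈ Set.Ioc (0:ℝ) ε0, IntervalIntegrable ψ volume t0 (t0+ε)) :
    Tendsto (fun ε : ℝ => ε⁻¹ ^ 2 * ∫ u in t0..t0+ε, ψ u) (nhdsWithin 0 (Set.Ioi 0))
      (nhds (L/2)) := by
  rw [Metric.tendsto_nhdsWithin_nhds]
  intro δ hδ
  have hc : (0:ℝ) < δ/4 := by linarith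
  have hev : ∀ᶠ u in nhds t0, ‖ψ u - ψ t0 - (u - t0) • L‖ ≤ (δ/4) * ‖u - t0‖ :=
    (hasDerivAt_iff_isLittleO.mp hd).def hc
  rw [Metric.eventually_nhds_iff] at hev
  obtain ⟨r, hr, hball⟩ := hev
  refine ⟨min r ε0, lt_min hr hε0, ?_⟩
  intro ε hε hdist
  have hε' : 0 < ε := hε
  rw [Real.dist_eq, sub_zero, abs_of_pos hε'] at hdist
  have hεr : ε < r := lt_of_lt_of_le hdist (min_le_left _ _)
  have hεε0 : ε ≤ ε0 := le_of_lt (lt_of_lt_of_le hdist (min_le_right _ _))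
  have hψint := hint ε ⟨hε', hεε0⟩
  have hlin : IntervalIntegrable (fun u => (u - t0) * L) volume t0 (t0+ε) :=
    (Continuous.mul (by continuity) continuous_const).intervalIntegrable _ _
  have hbase : (∫ u in t0..t0+ε, (u - t0)) = ε^2/2 := by
    have h1 := integral_comp_sub_right (a := t0) (b := t0 + ε) (fun x => x) t0
    simp only [sub_self, add_sub_cancel_left] at h1
    rw [h1, integral_id]; ring
  have hIlin : (∫ u in t0..t0+ε, (u - t0) * L) = ε^2/2 * L := by
    rw [intervalIntegral.integral_mul_const, hbase]
  have hbound : ∀ u ∈ Set.Icc t0 (t0+ε), |ψ u - (u - t0) * L| ≤ (δ/4) * (u - t0) := by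
    intro u hu
    have hd1 : dist u t0 < r := by
      rw [Real.dist_eq, abs_of_nonneg (by linarith [hu.1])]
      linarith [hu.2]
    have := hball hd1
    rw [hψ0, sub_zero] at this
    simpa [Real.norm_eq_abs, smul_eq_mul, abs_of_nonneg (by linarith [hu.1] : (0:ℝ) ≤ u - t0)]
      using this
  have habs : IntervalIntegrable (fun u => |ψ u - (u - t0) * L|) volume t0 (t0+ε) :=
    (hψint.sub hlin).abs
  have hgi : IntervalIntegrable (fun u => (δ/4) * (u - t0)) volume t0 (t0+ε) :=
    (continuous_const.mul (by continuity)).intervalIntegrable _ _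
  have hEle : |∫ u in t0..t0+ε, (ψ u - (u - t0) * L)| ≤ (δ/4) * (ε^2/2) := by
    calc |∫ u in t0..t0+ε, (ψ u - (u - t0) * L)|
        ≤ ∫ u in t0..t0+ε, |ψ u - (u - t0) * L| := by
          simpa [Real.norm_eq_abs] using
            intervalIntegral.norm_integral_le_integral_norm (f := fun u => ψ u - (u - t0) * L)
              (by linarith : t0 ≤ t0 + ε)
      _ ≤ ∫ u in t0..t0+ε, (δ/4) * (u - t0) :=
          intervalIntegral.integral_mono_on (by linarith) habs hgi hbound
      _ = (δ/4) * (ε^2/2) := by rw [intervalIntegral.integral_const_mul, hbase]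
  have hsub : (∫ u in t0..t0+ε, (ψ u - (u - t0) * L))
      = (∫ u in t0..t0+ε, ψ u) - ε^2/2 * L := by
    rw [intervalIntegral.integral_sub hψint hlin, hIlin]
  have hε2 : (0:ℝ) < ε^2 := by positivity
  rw [Real.dist_eq]
  have key : ε⁻¹ ^ 2 * (∫ u in t0..t0+ε, ψ u) - L/2
      = ε⁻¹ ^ 2 * ((∫ u in t0..t0+ε, ψ u) - ε^2/2 * L) := by
    field_simp
  rw [key, abs_mul, ← hsub]
  have : |ε⁻¹ ^ 2| = (ε^2)⁻¹ := by
    rw [abs_of_pos (by positivity), ← inv_pow]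
  rw [this]
  calc (ε^2)⁻¹ * |∫ u in t0..t0+ε, (ψ u - (u - t0) * L)|
      ≤ (ε^2)⁻¹ * ((δ/4) * (ε^2/2)) := by
        apply mul_le_mul_of_nonneg_left hEle (by positivity)
    _ = δ/8 := by
        rw [show (δ/4)*(ε^2/2) = (ε^2) * (δ/8) by ring, inv_mul_cancel_left₀ hε2.ne']
    _ < δ := by linarith


lemma fubini1 (M t0 ε : ℝ) (ht0 : t0 ∈ Set.Ioo 0 M) (hε : 0 < ε) (hεM : t0 + ε ≤ M)
    (F0 : ℝ → ℝ) (hF0 : ContinuousOn F0 (Set.Icc 0 M)) (H : ℝ × ℝ → ℝ) (hH : Continuous H)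
    (S : Set (ℝ × ℝ)) (hS : S = {p : ℝ × ℝ | 0 ≤ p.1 ∧ p.1 < p.2 ∧ p.2 ≤ M})
    (hmS : MeasurableSet S) :
    (∫ p in S, (F0 p.1 - F0 t0) * (if t0 ≤ p.1 ∧ p.1 ≤ t0 + ε then 1 else 0) * H p)
      = ∫ u in t0..t0+ε, (F0 u - F0 t0) * ∫ w in u..M, H (u, w) := by
  set G : ℝ × ℝ → ℝ :=
    fun p => (F0 p.1 - F0 t0) * (if t0 ≤ p.1 ∧ p.1 ≤ t0 + ε then 1 else 0) * H p with hG
  set φ : ℝ × ℝ → ℝ := fun p => (F0 p.1 - F0 t0) * H p with hφ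
  set T : Set (ℝ × ℝ) := {p | t0 ≤ p.1 ∧ p.1 ≤ t0 + ε} with hTdef
  have hGT : G = Set.indicator T φ := by
    funext p
    by_cases hp : p ∈ T
    · rw [Set.indicator_of_mem hp]
      simp only [hG, hφ, if_pos (show t0 ≤ p.1 ∧ p.1 ≤ t0 + ε from hp), mul_one]
    · rw [Set.indicator_of_notMem hp]
      simp only [hG, if_neg (show ¬(t0 ≤ p.1 ∧ p.1 ≤ t0 + ε) from hp), mul_zero, zero_mul]
  have hT : MeasurableSet T :=
    (measurableSet_le measurable_const measurable_fst).inter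
      (measurableSet_le measurable_fst measurable_const)
  set K : Set (ℝ × ℝ) := Set.Icc 0 M ×ˢ Set.Icc 0 M with hK
  have hφcont : ContinuousOn φ K := by
    apply ContinuousOn.mul _ hH.continuousOn
    apply ContinuousOn.sub _ continuousOn_const
    exact hF0.comp continuous_fst.continuousOn (fun p hp => hp.1)
  have hφK : IntegrableOn φ K := hφcont.integrableOn_compact (isCompact_Icc.prod isCompact_Icc)
  have hSK : S ⊆ K := by
    rw [hS, hK]
    rintro ⟨u, v⟩ ⟨h1, h2, h3⟩
    exact ⟨⟨h1, le_trans (le_of_lt h2) h3⟩, ⟨le_trans h1 (le_of_lt h2), h3⟩⟩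
  have hGint : IntegrableOn G S := by
    rw [hGT]; exact (hφK.indicator hT).mono_set hSK
  have hind : Integrable (S.indicator G) (volume.prod volume) := by
    rw [← MeasureTheory.Measure.volume_eq_prod]
    exact (integrable_indicator_iff hmS).mpr hGint
  rw [← MeasureTheory.integral_indicator hmS]
  rw [MeasureTheory.Measure.volume_eq_prod, MeasureTheory.integral_prod _ hind]
  have hfun : (fun u => ∫ v, S.indicator G (u, v))
      = Set.indicator (Set.Icc t0 (t0+ε)) (fun u => (F0 u - F0 t0) * ∫ w in u..M, H (u, w)) := by
    funext u
    by_cases hu : u ∈ Set.Icc t0 (t0+ε)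
    · have h0u : (0:ℝ) < u := lt_of_lt_of_le ht0.1 hu.1
      have huM : u ≤ M := le_trans hu.2 hεM
      have hvind : (fun v => S.indicator G (u, v))
          = Set.indicator (Set.Ioc u M) (fun v => (F0 u - F0 t0) * H (u, v)) := by
        funext v
        by_cases hv : v ∈ Set.Ioc u M
        · have hmem : (u, v) ∈ S := by rw [hS]; exact ⟨le_of_lt h0u, hv.1, hv.2⟩
          rw [Set.indicator_of_mem hmem, Set.indicator_of_mem hv]
          simp only [hG, if_pos (show t0 ≤ (u,v).1 ∧ (u,v).1 ≤ t0 + ε from ⟨hu.1, hu.2⟩), mul_one]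
        · have hnmem : (u, v) ∉ S := by
            rw [hS]; rintro ⟨h1, h2, h3⟩; exact hv ⟨h2, h3⟩
          rw [Set.indicator_of_notMem hnmem, Set.indicator_of_notMem hv]
      rw [hvind, MeasureTheory.integral_indicator measurableSet_Ioc,
        MeasureTheory.integral_const_mul, ← intervalIntegral.integral_of_le huM,
        Set.indicator_of_mem hu]
    · have hz : ∀ v, S.indicator G (u, v) = 0 := by
        intro v
        by_cases hm : (u, v) ∈ S
        · rw [Set.indicator_of_mem hm]
          simp only [hG, if_neg (show ¬(t0 ≤ (u,v).1 ∧ (u,v).1 ≤ t0 + ε) from hu),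
            mul_zero, zero_mul]
        · exact Set.indicator_of_notMem hm _
      simp only [hz, MeasureTheory.integral_zero, Set.indicator_of_notMem hu]
  rw [hfun, MeasureTheory.integral_indicator measurableSet_Icc,
    MeasureTheory.integral_Icc_eq_integral_Ioc,
    ← intervalIntegral.integral_of_le (by linarith : t0 ≤ t0 + ε)]

lemma fubini2 (M t0 ε : ℝ) (ht0 : t0 ∈ Set.Ioo 0 M) (hε : 0 < ε) (hεM : t0 + ε ≤ M)
    (F0 : ℝ → ℝ) (hF0 : ContinuousOn F0 (Set.Icc 0 M)) (H : ℝ × ℝ → ℝ) (hH : Continuous H)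
    (S : Set (ℝ × ℝ)) (hS : S = {p : ℝ × ℝ | 0 ≤ p.1 ∧ p.1 < p.2 ∧ p.2 ≤ M})
    (hmS : MeasurableSet S) :
    (∫ p in S, (F0 p.2 - F0 t0) * (if t0 ≤ p.2 ∧ p.2 ≤ t0 + ε then 1 else 0) * H p)
      = ∫ v in t0..t0+ε, (F0 v - F0 t0) * ∫ w in (0:ℝ)..v, H (w, v) := by
  set G : ℝ × ℝ → ℝ :=
    fun p => (F0 p.2 - F0 t0) * (if t0 ≤ p.2 ∧ p.2 ≤ t0 + ε then 1 else 0) * H p with hG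
  set φ : ℝ × ℝ → ℝ := fun p => (F0 p.2 - F0 t0) * H p with hφ
  set T : Set (ℝ × ℝ) := {p | t0 ≤ p.2 ∧ p.2 ≤ t0 + ε} with hTdef
  have hGT : G = Set.indicator T φ := by
    funext p
    by_cases hp : p ∈ T
    · rw [Set.indicator_of_mem hp]
      simp only [hG, hφ, if_pos (show t0 ≤ p.2 ∧ p.2 ≤ t0 + ε from hp), mul_one]
    · rw [Set.indicator_of_notMem hp]
      simp only [hG, if_neg (show ¬(t0 ≤ p.2 ∧ p.2 ≤ t0 + ε) from hp), mul_zero, zero_mul]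
  have hT : MeasurableSet T :=
    (measurableSet_le measurable_const measurable_snd).inter
      (measurableSet_le measurable_snd measurable_const)
  set K : Set (ℝ × ℝ) := Set.Icc 0 M ×ˢ Set.Icc 0 M with hK
  have hφcont : ContinuousOn φ K := by
    apply ContinuousOn.mul _ hH.continuousOn
    apply ContinuousOn.sub _ continuousOn_const
    exact hF0.comp continuous_snd.continuousOn (fun p hp => hp.2)
  have hφK : IntegrableOn φ K := hφcont.integrableOn_compact (isCompact_Icc.prod isCompact_Icc)
  have hSK : S ⊆ K := by
    rw [hS, hK]
    rintro ⟨u, v⟩ ⟨h1, h2, h3⟩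
    exact ⟨⟨h1, le_trans (le_of_lt h2) h3⟩, ⟨le_trans h1 (le_of_lt h2), h3⟩⟩
  have hGint : IntegrableOn G S := by
    rw [hGT]; exact (hφK.indicator hT).mono_set hSK
  have hind : Integrable (S.indicator G) (volume.prod volume) := by
    rw [← MeasureTheory.Measure.volume_eq_prod]
    exact (integrable_indicator_iff hmS).mpr hGint
  rw [← MeasureTheory.integral_indicator hmS]
  rw [MeasureTheory.Measure.volume_eq_prod, MeasureTheory.integral_prod_symm _ hind]
  have hfun : (fun v => ∫ u, S.indicator G (u, v))
      = Set.indicator (Set.Icc t0 (t0+ε)) (fun v => (F0 v - F0 t0) * ∫ w in (0:ℝ)..v, H (w, v)) := by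
    funext v
    by_cases hv : v ∈ Set.Icc t0 (t0+ε)
    · have h0v : (0:ℝ) < v := lt_of_lt_of_le ht0.1 hv.1
      have hvM : v ≤ M := le_trans hv.2 hεM
      have huind : (fun u => S.indicator G (u, v))
          = Set.indicator (Set.Ico 0 v) (fun u => (F0 v - F0 t0) * H (u, v)) := by
        funext u
        by_cases hu : u ∈ Set.Ico 0 v
        · have hmem : (u, v) ∈ S := by rw [hS]; exact ⟨hu.1, hu.2, hvM⟩
          rw [Set.indicator_of_mem hmem, Set.indicator_of_mem hu]
          simp only [hG, if_pos (show t0 ≤ (u,v).2 ∧ (u,v).2 ≤ t0 + ε from ⟨hv.1, hv.2⟩), mul_one]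
        · have hnmem : (u, v) ∉ S := by
            rw [hS]; rintro ⟨h1, h2, h3⟩; exact hu ⟨h1, h2⟩
          rw [Set.indicator_of_notMem hnmem, Set.indicator_of_notMem hu]
      rw [huind, MeasureTheory.integral_indicator measurableSet_Ico,
        MeasureTheory.setIntegral_congr_set MeasureTheory.Ico_ae_eq_Ioc,
        MeasureTheory.integral_const_mul, ← intervalIntegral.integral_of_le (le_of_lt h0v),
        Set.indicator_of_mem hv]
    · have hz : ∀ u, S.indicator G (u, v) = 0 := by
        intro u
        by_cases hm : (u, v) ∈ S
        · rw [Set.indicator_of_mem hm]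
          simp only [hG, if_neg (show ¬(t0 ≤ (u,v).2 ∧ (u,v).2 ≤ t0 + ε) from hv),
            mul_zero, zero_mul]
        · exact Set.indicator_of_notMem hm _
      simp only [hz, MeasureTheory.integral_zero, Set.indicator_of_notMem hv]
  rw [hfun, MeasureTheory.integral_indicator measurableSet_Icc,
    MeasureTheory.integral_Icc_eq_integral_Ioc,
    ← intervalIntegral.integral_of_le (by linarith : t0 ≤ t0 + ε)]

/-- Interval censoring, case 2: the local drift (parabolic) expansion — the deterministic
part of the localized cusum process around `t₀` has quadratic behavior with coefficient
`f₀(t₀)(h₁(t₀) + h₂(t₀))`. -/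
theorem stmt12 (M : ℝ) (hM : 0 < M) (t0 : ℝ) (ht0 : t0 ∈ Set.Ioo 0 M)
    (F0 f0 : ℝ → ℝ)
    (hderiv : ∀ x ∈ Set.Icc (0 : ℝ) M, HasDerivAt F0 (f0 x) x)
    (hf0cont : ContinuousOn f0 (Set.Icc 0 M))
    (S : Set (ℝ × ℝ)) (hS : S = {p : ℝ × ℝ | 0 ≤ p.1 ∧ p.1 < p.2 ∧ p.2 ≤ M})
    (Sbar : Set (ℝ × ℝ)) (hSbar : Sbar = {p : ℝ × ℝ | 0 ≤ p.1 ∧ p.1 ≤ p.2 ∧ p.2 ≤ M})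
    (h : ℝ × ℝ → ℝ) (hhcont : ContinuousOn h Sbar)
    (h1 h2 : ℝ → ℝ)
    (hh1 : ∀ t, h1 t = ∫ w in t..M, h (t, w))
    (hh2 : ∀ t, h2 t = ∫ w in (0 : ℝ)..t, h (w, t)) :
    Tendsto (fun ε : ℝ => ε⁻¹ ^ 2 *
        (2 * (∫ p in S, (F0 p.1 - F0 t0)
              * (if t0 ≤ p.1 ∧ p.1 ≤ t0 + ε then 1 else 0) * h p)
          + 2 * (∫ p in S, (F0 p.2 - F0 t0)
              * (if t0 ≤ p.2 ∧ p.2 ≤ t0 + ε then 1 else 0) * h p)))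
      (nhdsWithin 0 (Set.Ioi 0))
      (nhds (f0 t0 * (h1 t0 + h2 t0))) := by
  have ht01 : 0 < t0 := ht0.1
  have ht02 : t0 < M := ht0.2
  -- Sbar is closed
  have hSbarclosed : IsClosed Sbar := by
    rw [hSbar]
    have : {p : ℝ × ℝ | 0 ≤ p.1 ∧ p.1 ≤ p.2 ∧ p.2 ≤ M}
        = {p : ℝ × ℝ | 0 ≤ p.1} ∩ ({p : ℝ × ℝ | p.1 ≤ p.2} ∩ {p : ℝ × ℝ | p.2 ≤ M}) := by
      ext p; simp [Set.mem_setOf_eq, Set.mem_inter_iff]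
    rw [this]
    exact (isClosed_le continuous_const continuous_fst).inter
      ((isClosed_le continuous_fst continuous_snd).inter
        (isClosed_le continuous_snd continuous_const))
  -- Tietze extension
  obtain ⟨Hc, hHc⟩ := ContinuousMap.exists_restrict_eq (X := ℝ × ℝ) (Y := ℝ)
    hSbarclosed ⟨Sbar.restrict h, hhcont.restrict⟩
  set H : ℝ × ℝ → ℝ := ⇑Hc with hHdef
  have hH : Continuous H := Hc.continuous
  have hHeq : ∀ p ∈ Sbar, H p = h p := by
    intro p hp
    have := DFunLike.congr_fun hHc ⟨p, hp⟩
    exact this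
  -- measurability of S
  have hmS : MeasurableSet S := by
    rw [hS]
    exact (measurableSet_le measurable_const measurable_fst).inter
      ((measurableSet_lt measurable_fst measurable_snd).inter
        (measurableSet_le measurable_snd measurable_const))
  have hSsub : S ⊆ Sbar := by
    rw [hS, hSbar]; rintro p ⟨a, b, c⟩; exact ⟨a, le_of_lt b, c⟩
  -- continuity of F0 on Icc
  have hF0cont : ContinuousOn F0 (Set.Icc 0 M) :=
    fun x hx => ((hderiv x hx).continuousAt).continuousWithinAt
  -- the parametric integrals
  set c1 : ℝ → ℝ := fun u => ∫ w in u..M, H (u, w) with hc1def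
  set c2 : ℝ → ℝ := fun v => ∫ w in (0:ℝ)..v, H (w, v) with hc2def
  have hc1 : Continuous c1 := by
    have h2 : Continuous fun u : ℝ => ∫ w in M..u, H (u, w) :=
      intervalIntegral.continuous_parametric_intervalIntegral_of_continuous
        (f := fun u w => H (u, w)) (μ := volume)
        (hH.comp (continuous_fst.prodMk continuous_snd)) continuous_id
    have heq : c1 = fun u => -∫ w in M..u, H (u, w) := by
      funext u; rw [hc1def]; exact intervalIntegral.integral_symm M u
    rw [heq]; exact h2.neg
  have hc2 : Continuous c2 :=
    intervalIntegral.continuous_parametric_intervalIntegral_of_continuous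
      (f := fun v w => H (w, v)) (μ := volume)
      (hH.comp (continuous_snd.prodMk continuous_fst)) continuous_id
  -- identification of c1 t0 and c2 t0
  have hc1t0 : c1 t0 = h1 t0 := by
    rw [hh1 t0, hc1def]
    apply intervalIntegral.integral_congr
    intro w hw
    rw [Set.uIcc_of_le (le_of_lt ht02)] at hw
    exact hHeq (t0, w) (by rw [hSbar]; exact ⟨le_of_lt ht01, hw.1, hw.2⟩)
  have hc2t0 : c2 t0 = h2 t0 := by
    rw [hh2 t0, hc2def]
    apply intervalIntegral.integral_congr
    intro w hw
    rw [Set.uIcc_of_le (le_of_lt ht01)] at hw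
    exact hHeq (w, t0) (by rw [hSbar]; exact ⟨hw.1, hw.2, le_of_lt ht02⟩)
  -- the combined function
  set ψ : ℝ → ℝ := fun u => 2 * ((F0 u - F0 t0) * (c1 u + c2 u)) with hψdef
  have hψ0 : ψ t0 = 0 := by simp [hψdef]
  -- derivative of ψ at t0
  have hψd : HasDerivAt ψ (2 * (f0 t0 * (c1 t0 + c2 t0))) t0 := by
    have hbase : HasDerivAt (fun u => (F0 u - F0 t0) * (c1 u + c2 u))
        (f0 t0 * (c1 t0 + c2 t0)) t0 := by
      rw [hasDerivAt_iff_tendsto_slope]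
      have hF := hasDerivAt_iff_tendsto_slope.mp
        (hderiv t0 ⟨le_of_lt ht01, le_of_lt ht02⟩)
      have hcc : Tendsto (fun u => c1 u + c2 u) (nhdsWithin t0 {t0}ᶜ)
          (nhds (c1 t0 + c2 t0)) :=
        ((hc1.add hc2).tendsto t0).mono_left nhdsWithin_le_nhds
      refine (hF.mul hcc).congr' ?_
      filter_upwards [self_mem_nhdsWithin] with u hu
      have hne : u - t0 ≠ 0 := sub_ne_zero.mpr hu
      simp only [slope_def_field]
      field_simp
      ring
    exact hbase.const_mul 2
  -- interval integrability of ψ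
  have hψcont : ContinuousOn ψ (Set.Icc 0 M) := by
    rw [hψdef]
    exact continuousOn_const.mul
      ((hF0cont.sub continuousOn_const).mul (hc1.add hc2).continuousOn)
  have hψint : ∀ ε ∈ Set.Ioc (0:ℝ) (M - t0), IntervalIntegrable ψ volume t0 (t0 + ε) := by
    intro ε hε
    apply ContinuousOn.intervalIntegrable
    apply hψcont.mono
    rw [Set.uIcc_of_le (by linarith [hε.1] : t0 ≤ t0 + ε)]
    intro x hx
    exact ⟨by linarith [hx.1], by linarith [hx.2, hε.2]⟩
  -- the limit
  have hlim := aux_limit ψ t0 (2 * (f0 t0 * (c1 t0 + c2 t0))) (M - t0)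
    (by linarith) hψ0 hψd hψint
  have htarget : (2 * (f0 t0 * (c1 t0 + c2 t0))) / 2 = f0 t0 * (h1 t0 + h2 t0) := by
    rw [hc1t0, hc2t0]; ring
  rw [htarget] at hlim
  -- eventual equality
  refine Tendsto.congr' ?_ hlim
  have hmem : Set.Ioo (0:ℝ) (M - t0) ∈ nhdsWithin (0:ℝ) (Set.Ioi 0) :=
    Ioo_mem_nhdsGT_of_mem (Set.left_mem_Ico.mpr (by linarith))
  filter_upwards [hmem] with ε hε
  have hε0 : 0 < ε := hε.1
  have hεM : t0 + ε ≤ M := by linarith [hε.2]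
  -- replace h by H in the integrals
  have heq1 : (∫ p in S, (F0 p.1 - F0 t0)
        * (if t0 ≤ p.1 ∧ p.1 ≤ t0 + ε then 1 else 0) * h p)
      = ∫ p in S, (F0 p.1 - F0 t0)
        * (if t0 ≤ p.1 ∧ p.1 ≤ t0 + ε then 1 else 0) * H p := by
    apply MeasureTheory.setIntegral_congr_fun hmS
    intro p hp
    dsimp only
    rw [hHeq p (hSsub hp)]
  have heq2 : (∫ p in S, (F0 p.2 - F0 t0)
        * (if t0 ≤ p.2 ∧ p.2 ≤ t0 + ε then 1 else 0) * h p)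
      = ∫ p in S, (F0 p.2 - F0 t0)
        * (if t0 ≤ p.2 ∧ p.2 ≤ t0 + ε then 1 else 0) * H p := by
    apply MeasureTheory.setIntegral_congr_fun hmS
    intro p hp
    dsimp only
    rw [hHeq p (hSsub hp)]
  rw [heq1, heq2,
    fubini1 M t0 ε ht0 hε0 hεM F0 hF0cont H hH S hS hmS,
    fubini2 M t0 ε ht0 hε0 hεM F0 hF0cont H hH S hS hmS]
  -- linearity
  have hg1int : IntervalIntegrable (fun u => (F0 u - F0 t0) * c1 u) volume t0 (t0 + ε) := by
    apply ContinuousOn.intervalIntegrable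
    apply ContinuousOn.mono ((hF0cont.sub continuousOn_const).mul hc1.continuousOn)
    rw [Set.uIcc_of_le (by linarith : t0 ≤ t0 + ε)]
    intro x hx
    exact ⟨by linarith [hx.1], by linarith [hx.2]⟩
  have hg2int : IntervalIntegrable (fun u => (F0 u - F0 t0) * c2 u) volume t0 (t0 + ε) := by
    apply ContinuousOn.intervalIntegrable
    apply ContinuousOn.mono ((hF0cont.sub continuousOn_const).mul hc2.continuousOn)
    rw [Set.uIcc_of_le (by linarith : t0 ≤ t0 + ε)]
    intro x hx
    exact ⟨by linarith [hx.1], by linarith [hx.2]⟩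
  have hsplit : (∫ u in t0..t0+ε, ψ u)
      = 2 * (∫ u in t0..t0+ε, (F0 u - F0 t0) * c1 u)
        + 2 * (∫ u in t0..t0+ε, (F0 u - F0 t0) * c2 u) := by
    have : ψ = fun u => 2 * ((F0 u - F0 t0) * c1 u) + 2 * ((F0 u - F0 t0) * c2 u) := by
      funext u; rw [hψdef]; ring
    rw [this, intervalIntegral.integral_add (hg1int.const_mul 2) (hg2int.const_mul 2),
      intervalIntegral.integral_const_mul, intervalIntegral.integral_const_mul]
  rw [hsplit]
end
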